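/- arXiv:1403.2339 — 7 statements merged into one kernel-verified Lean document; each statement's English description precedes it below -/
import Mathlib

section
/- Let a, b be positive integers with a ≥ 2b, let G be a graph and let G_v be obtained from G by adding a new vertex v adjacent to exactly one vertex u of G. Then G is free (a,b)-choosable if and only if G_v is free (a,b)-choosable. -/
/-- An (L,b)-coloring of `G`: each vertex gets a `b`-element subset of its list,
with disjoint sets on adjacent vertices. -/
def IsLbColoring {V : Type*} (G : SimpleGraph V) (L : V → Finset ℤ) (b : ℕ)
    (c : V → Finset ℤ) : Prop :=
  (∀ v, c v ⊆ L v) ∧ (∀ v, (c v).card = b) ∧ ∀ ⦃v w⦄, G.Adj v w → Disjoint (c v) (c w)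

/-- `G` is (a,b)-choosable. -/
def Choosable {V : Type*} (G : SimpleGraph V) (a b : ℕ) : Prop :=
  ∀ L : V → Finset ℤ, (∀ v, (L v).card = a) → ∃ c, IsLbColoring G L b c

/-- `G` is free (a,b)-choosable. -/
def FreeChoosable {V : Type*} (G : SimpleGraph V) (a b : ℕ) : Prop :=
  ∀ L : V → Finset ℤ, (∀ v, (L v).card = a) →
    ∀ v₀ : V, ∀ c₀ : Finset ℤ, c₀ ⊆ L v₀ → c₀.card = b →
      ∃ c, IsLbColoring G L b c ∧ c v₀ = c₀

/-- The cycle `C n` on vertex set `ZMod n`. -/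
def cycleGraph (n : ℕ) : SimpleGraph (ZMod n) :=
  SimpleGraph.fromRel (fun i j => j = i + 1)

/-- The graph obtained from `G` by adding a new leaf (`none`) adjacent to `u`. -/
def addLeaf {V : Type*} (G : SimpleGraph V) (u : V) : SimpleGraph (Option V) :=
  SimpleGraph.fromRel (fun x y =>
    (∃ w z, x = some w ∧ y = some z ∧ G.Adj w z) ∨ (x = none ∧ y = some u))

/-!
The leaf `v` sees only the `b` colours of `u`, and since `a ≥ 2b` every list keeps at least `b`
colours outside any `b`-set. So a colouring of `G` extends to `v` by choosing
`c v ⊆ L v \ c u`; when `v` itself is precoloured with `c₀`, precolour `u` instead with `b`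
colours of `L u \ c₀`. Conversely, giving the leaf the list of `u` and restricting a colouring
of `G_v` to `G` shows that `G` inherits free choosability.
-/

lemma Finset.exists_subset_card_eq_disjoint {α : Type*} [DecidableEq α] {s t : Finset α}
    {n : ℕ} (h : n + s.card ≤ t.card) : ∃ r ⊆ t, r.card = n ∧ Disjoint r s := by
  obtain ⟨r, hr, hcard⟩ := Finset.exists_subset_card_eq (s := t \ s) (n := n)
    (by have := Finset.le_card_sdiff s t; omega)
  exact ⟨r, hr.trans Finset.sdiff_subset, hcard,
    Finset.disjoint_of_subset_left hr Finset.sdiff_disjoint⟩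

section addLeaf

variable {V : Type*} {G : SimpleGraph V} {u : V}

lemma addLeaf_adj_some_some {w z : V} : (addLeaf G u).Adj (some w) (some z) ↔ G.Adj w z := by
  simpa [addLeaf, G.adj_comm z w] using G.ne_of_adj

lemma addLeaf_adj_none_some {x : V} : (addLeaf G u).Adj none (some x) ↔ x = u := by
  simp [addLeaf, eq_comm]

lemma IsLbColoring.of_addLeaf {L : Option V → Finset ℤ} {b : ℕ} {c : Option V → Finset ℤ}
    (hc : IsLbColoring (addLeaf G u) L b c) :
    IsLbColoring G (fun v => L (some v)) b (fun v => c (some v)) :=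
  ⟨fun v => hc.1 (some v), fun v => hc.2.1 (some v),
    fun _ _ hadj => hc.2.2 (addLeaf_adj_some_some.2 hadj)⟩

lemma IsLbColoring.addLeaf_elim' {L : Option V → Finset ℤ} {b : ℕ} {c : V → Finset ℤ}
    {cv : Finset ℤ} (hc : IsLbColoring G (fun v => L (some v)) b c) (hsub : cv ⊆ L none)
    (hcard : cv.card = b) (hdisj : Disjoint cv (c u)) :
    IsLbColoring (addLeaf G u) L b (Option.elim' cv c) := by
  obtain ⟨hsub', hcard', hdisj'⟩ := hc
  refine ⟨?_, ?_, ?_⟩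
  · rintro (_ | v)
    exacts [hsub, hsub' v]
  · rintro (_ | v)
    exacts [hcard, hcard' v]
  · rintro (_ | v) (_ | w) hadj
    · exact absurd rfl hadj.ne
    · obtain rfl := addLeaf_adj_none_some.1 hadj
      exact hdisj
    · obtain rfl := addLeaf_adj_none_some.1 hadj.symm
      exact hdisj.symm
    · exact hdisj' (addLeaf_adj_some_some.1 hadj)

variable {a b : ℕ}

lemma FreeChoosable.of_addLeaf (h : FreeChoosable (addLeaf G u) a b) : FreeChoosable G a b := by
  intro L hL v₀ c₀ hc₀ hcard
  obtain ⟨c, hc, hv₀⟩ :=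
    h (Option.elim' (L u) L) (by rintro (_ | v) <;> exact hL _) (some v₀) c₀ hc₀ hcard
  exact ⟨_, hc.of_addLeaf, hv₀⟩

lemma FreeChoosable.addLeaf (hab : 2 * b ≤ a) (h : FreeChoosable G a b) :
    FreeChoosable (addLeaf G u) a b := by
  intro L hL v₀ c₀ hc₀ hcard
  cases v₀ with
  | none =>
    obtain ⟨cu, hcu, hcu_card, hcu_disj⟩ :=
      Finset.exists_subset_card_eq_disjoint (s := c₀) (t := L (some u)) (n := b)
        (by rw [hL, hcard]; omega)
    obtain ⟨c, hc, hu⟩ := h _ (fun v => hL (some v)) u cu hcu hcu_card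
    exact ⟨_, hc.addLeaf_elim' hc₀ hcard (hu ▸ hcu_disj.symm), rfl⟩
  | some v₀ =>
    obtain ⟨c, hc, hv₀⟩ := h _ (fun v => hL (some v)) v₀ c₀ hc₀ hcard
    obtain ⟨cv, hcv, hcv_card, hcv_disj⟩ :=
      Finset.exists_subset_card_eq_disjoint (s := c u) (t := L none) (n := b)
        (by rw [hL, hc.2.1 u]; omega)
    exact ⟨_, hc.addLeaf_elim' hcv hcv_card hcv_disj, hv₀⟩

end addLeaf

theorem stmt1_general {V : Type*} (G : SimpleGraph V) (a b : ℕ)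
    (hab : 2 * b ≤ a) (u : V) :
    FreeChoosable G a b ↔ FreeChoosable (addLeaf G u) a b :=
  ⟨FreeChoosable.addLeaf hab, FreeChoosable.of_addLeaf⟩

/-- for `a ≥ 2b`, `G` is free (a,b)-choosable iff the graph obtained
by adding a leaf to some vertex `u` of `G` is free (a,b)-choosable. -/
theorem stmt1 {V : Type*} (G : SimpleGraph V) (a b : ℕ)
    (ha : 0 < a) (hb : 0 < b) (hab : 2 * b ≤ a) (u : V) :
    FreeChoosable G a b ↔ FreeChoosable (addLeaf G u) a b :=
  stmt1_general G a b hab u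
end

section
/- For the specific a-color-list L of C_{2p} (p ≥ 2, a < b(2 + 1/p)) defined by: L(0) = L(1) = {1,…,a}; for odd i ≠ 2p−1, L(i) = {((i−1)/2)a + 1, …, ((i−1)/2)a + a}; for even i ≠ 0, L(i) = {b + ((i−2)/2)a + 1, …, b + ((i−2)/2 + 1)a}; and L(2p−1) = {1,…,b} ∪ {(p−1)a + 1, …, pa − b}; there is no (L,b)-coloring c of C_{2p} with c(0) = {1,…,b}. -/
/-! With half-open integer intervals, vertex `2k+1` has list `(ka, ka+a]` and vertex `2k+2` has
`(ka+b, ka+a+b]` (for `k+1 < p`). Let `x_k` be the number of colours of vertex `2k+1` in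
`(ka, ka+b]`; vertex `1` avoids `c 0 = (0, b]`, so `x_0 = 0`. Vertex `2k+1` has at least `b - x_k`
colours in `(ka+b, ka+a]`, all forbidden for vertex `2k+2`, which therefore has at least
`3b - a - x_k` colours in `((k+1)a, (k+1)a+b]`, all forbidden for vertex `2k+3`. Hence
`x_{k+1} ≤ x_k + (a - 2b)`, so `x_{p-1} ≤ (p-1)(a-2b)`. The last vertex avoids `c 0`, so its colours
lie in `((p-1)a, pa-b]`, giving `b ≤ x_{p-1} + (a - 2b) ≤ p(a - 2b)`, i.e. `a/b ≥ 2 + 1/p`. -/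

/-- The specific `a`-color-list of `C_{2p}` from Lemma 1 of the paper. -/
noncomputable def L6 (a b p : ℕ) (i : ℕ) : Finset ℤ :=
  if i = 0 ∨ i = 1 then Finset.Icc 1 (a : ℤ)
  else if i = 2 * p - 1 then
    Finset.Icc 1 (b : ℤ) ∪ Finset.Icc (((p : ℤ) - 1) * a + 1) ((p : ℤ) * a - b)
  else if i % 2 = 1 then
    Finset.Icc (((((i - 1) / 2) * a : ℕ) : ℤ) + 1) (((((i - 1) / 2) * a : ℕ) : ℤ) + a)
  else
    Finset.Icc ((b : ℤ) + ((((i - 2) / 2) * a : ℕ) : ℤ) + 1)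
      ((b : ℤ) + (((((i - 2) / 2) + 1) * a : ℕ) : ℤ))

open Finset

namespace Finset

theorem card_inter_add_card_inter_le_of_disjoint {β : Type*} [DecidableEq β] {s t : Finset β}
    (hst : Disjoint s t) (u : Finset β) : #(s ∩ u) + #(t ∩ u) ≤ #u := by
  rw [← card_union_of_disjoint (hst.mono inter_subset_left inter_subset_left)]
  exact card_le_card (union_subset inter_subset_right inter_subset_right)

variable {α : Type*} [LinearOrder α] [LocallyFiniteOrder α]

theorem card_le_card_inter_Ioc_add_card_inter_Ioc {s : Finset α} {lo hi : α}
    (hs : s ⊆ Ioc lo hi) (m : α) : #s ≤ #(s ∩ Ioc lo m) + #(s ∩ Ioc m hi) := by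
  refine (card_le_card fun x hx => ?_).trans (card_union_le _ _)
  have hx' := mem_Ioc.mp (hs hx)
  rcases le_or_gt x m with hxm | hxm
  · exact mem_union_left _ (mem_inter.mpr ⟨hx, mem_Ioc.mpr ⟨hx'.1, hxm⟩⟩)
  · exact mem_union_right _ (mem_inter.mpr ⟨hx, mem_Ioc.mpr ⟨hxm, hx'.2⟩⟩)

theorem card_inter_Ioc_add_card_le_of_disjoint {s t : Finset α} {lo hi : α}
    (hs : s ⊆ Ioc lo hi) (hst : Disjoint s t) (m : α) :
    #(t ∩ Ioc m hi) + #s ≤ #(s ∩ Ioc lo m) + #(Ioc m hi) := by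
  have := card_le_card_inter_Ioc_add_card_inter_Ioc hs m
  have := card_inter_add_card_inter_le_of_disjoint hst (Ioc m hi)
  omega

end Finset

theorem card_inter_Ioc_add_two_mul_le_of_disjoint {s t u : Finset ℤ} {x : ℤ} {a b : ℕ}
    (hs : s ⊆ Ioc x (x + a)) (ht : t ⊆ Ioc (x + b) (x + a + b)) (hs_card : #s = b)
    (ht_card : #t = b) (hst : Disjoint s t) (htu : Disjoint t u) :
    #(u ∩ Ioc (x + a) (x + a + b)) + 2 * b ≤ #(s ∩ Ioc x (x + b)) + a := by
  have hs_to_t := card_inter_Ioc_add_card_le_of_disjoint hs hst (x + b)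
  have ht_to_u := card_inter_Ioc_add_card_le_of_disjoint ht htu (x + a)
  have hba := card_le_card ht
  simp only [Int.card_Ioc] at hs_to_t ht_to_u hba
  omega

section L6

variable {a b p : ℕ}

theorem L6_two_mul_add_one {k : ℕ} (hk : k + 1 < p) :
    L6 a b p (2 * k + 1) = Ioc ((k : ℤ) * a) (k * a + a) := by
  ext x
  rcases Nat.eq_zero_or_pos k with rfl | hk0
  · simp [L6]
    omega
  · simp only [L6, if_neg (show ¬(2 * k + 1 = 0 ∨ 2 * k + 1 = 1) by omega),
      if_neg (show 2 * k + 1 ≠ 2 * p - 1 by omega), if_pos (show (2 * k + 1) % 2 = 1 by omega),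
      show (2 * k + 1 - 1) / 2 = k by omega, mem_Icc, mem_Ioc]
    push_cast
    omega

theorem L6_two_mul_add_two {k : ℕ} (hk : k + 1 < p) :
    L6 a b p (2 * k + 2) = Ioc ((k : ℤ) * a + b) (k * a + a + b) := by
  ext x
  simp only [L6, if_neg (show ¬(2 * k + 2 = 0 ∨ 2 * k + 2 = 1) by omega),
    if_neg (show 2 * k + 2 ≠ 2 * p - 1 by omega), if_neg (show ¬(2 * k + 2) % 2 = 1 by omega),
    show (2 * k + 2 - 2) / 2 = k by omega, mem_Icc, mem_Ioc]
  push_cast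
  constructor <;> intro h <;> constructor <;> linarith [h.1, h.2]

theorem L6_two_mul_add_one_of_eq {k : ℕ} (hk : k + 1 = p) (hk0 : 1 ≤ k) :
    L6 a b p (2 * k + 1) = Ioc 0 (b : ℤ) ∪ Ioc ((k : ℤ) * a) (k * a + a - b) := by
  subst hk
  rw [L6, if_neg (by omega), if_pos (by omega)]
  ext x
  simp only [mem_union, mem_Icc, mem_Ioc]
  push_cast
  constructor <;> rintro (h | h) <;> [left; right; left; right] <;> constructor <;>
    linarith [h.1, h.2]

theorem L6_colouring_card_inter_Ioc_le {d : ℕ → Finset ℤ}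
    (hd : ∀ i < 2 * p, d i ⊆ L6 a b p i ∧ #(d i) = b) (hdisj : ∀ i, Disjoint (d i) (d (i + 1)))
    {k : ℕ} (hk : k < p) :
    #(d (2 * k + 1) ∩ Ioc ((k : ℤ) * a) (k * a + b)) + k * (2 * b) ≤ k * a + #(d 1 ∩ Ioc 0 b) := by
  induction k with
  | zero => simp
  | succ k ih =>
    have hstep := card_inter_Ioc_add_two_mul_le_of_disjoint
      ((hd (2 * k + 1) (by omega)).1.trans (L6_two_mul_add_one hk).le)
      ((hd (2 * k + 2) (by omega)).1.trans (L6_two_mul_add_two hk).le)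
      (hd (2 * k + 1) (by omega)).2 (hd (2 * k + 2) (by omega)).2 (hdisj _) (hdisj _)
    rw [show 2 * (k + 1) + 1 = 2 * k + 2 + 1 by ring, show ((k + 1 : ℕ) : ℤ) * a = k * a + a by
      push_cast; ring]
    have := ih (by omega)
    rw [show (k + 1) * (2 * b) = k * (2 * b) + 2 * b by ring, show (k + 1) * a = k * a + a by ring]
    omega

theorem L6_colouring_two_mul_add_one_mul_le {d : ℕ → Finset ℤ} (hp : 2 ≤ p)
    (hd : ∀ i < 2 * p, d i ⊆ L6 a b p i ∧ #(d i) = b) (hdisj : ∀ i, Disjoint (d i) (d (i + 1)))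
    (hd0 : d 0 = Ioc 0 (b : ℤ)) (hwrap : d (2 * p) = d 0) :
    (2 * p + 1) * b ≤ p * a := by
  obtain ⟨k, rfl⟩ : ∃ k, p = k + 1 := ⟨p - 1, by omega⟩
  have hlast : d (2 * k + 1) ⊆ Ioc ((k : ℤ) * a) (k * a + a - b) := by
    intro x hx
    have hx' := (hd (2 * k + 1) (by omega)).1 hx
    rw [L6_two_mul_add_one_of_eq rfl (by omega)] at hx'
    refine (mem_union.mp hx').resolve_left fun hx0 => disjoint_left.mp (hdisj (2 * k + 1)) hx ?_
    rwa [show 2 * k + 1 + 1 = 2 * (k + 1) by ring, hwrap, hd0]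
  have hinv := L6_colouring_card_inter_Ioc_le hd hdisj (k := k) (by omega)
  have hfirst : #(d 1 ∩ Ioc 0 b) = 0 := by
    rw [card_eq_zero, ← disjoint_iff_inter_eq_empty, ← hd0]
    exact (hdisj 0).symm
  have hsplit := card_le_card_inter_Ioc_add_card_inter_Ioc hlast (k * a + b)
  have hupper := card_le_card (inter_subset_right (s₁ := d (2 * k + 1))
    (s₂ := Ioc ((k : ℤ) * a + b) (k * a + a - b)))
  rw [(hd (2 * k + 1) (by omega)).2] at hsplit
  rw [Int.card_Ioc] at hupper
  have h2b : 2 * b ≤ a := by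
    by_contra h
    have := Nat.mul_le_mul_left k (not_le.mp h).le
    omega
  rw [show (2 * (k + 1) + 1) * b = k * (2 * b) + 3 * b by ring,
    show (k + 1) * a = k * a + a by ring]
  omega

end L6

/-- for `p ≥ 2` and `a/b < 2 + 1/p`, there is no (L,b)-coloring `c`
of `C_{2p}` with the above lists such that `c 0 = {1,…,b}`. -/
theorem stmt6 (a b p : ℕ) (hp : 2 ≤ p) [NeZero (2 * p)] (hb : 0 < b)
    (hab : (a : ℚ) / b < 2 + 1 / p) :
    ¬ ∃ c : Fin (2 * p) → Finset ℤ,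
      (∀ i, c i ⊆ L6 a b p i.val ∧ (c i).card = b) ∧
      (∀ i : Fin (2 * p), Disjoint (c i) (c (i + 1))) ∧
      c ⟨0, by omega⟩ = Finset.Icc 1 (b : ℤ) := by
  rintro ⟨c, hc, hdisj, hc0⟩
  open Fin.NatCast in
  set d : ℕ → Finset ℤ := fun i => c (i : Fin (2 * p))
  have hd : ∀ i < 2 * p, d i ⊆ L6 a b p i ∧ #(d i) = b := fun i hi => by
    simpa [d, Fin.val_natCast, Nat.mod_eq_of_lt hi] using hc (i : Fin (2 * p))
  have hd0 : d 0 = Ioc 0 (b : ℤ) := by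
    rw [← Finset.Icc_add_one_left_eq_Ioc, zero_add]
    exact hc0
  have hle := L6_colouring_two_mul_add_one_mul_le hp hd
    (fun i => by simpa only [d, Nat.cast_succ] using hdisj (i : Fin (2 * p))) hd0 (by simp [d])
  have hlt : ((p * a : ℕ) : ℚ) < ((2 * p + 1) * b : ℕ) := by
    rw [div_lt_iff₀ (by positivity)] at hab
    push_cast
    calc (p : ℚ) * a < p * ((2 + 1 / p) * b) := by gcongr
      _ = (2 * p + 1) * b := by field_simp
  exact (Nat.cast_lt.mp hlt).not_ge hle
end

section
/- Let b, e, n be positive integers with n ≥ Even(2b/e), where Even(x) is the smallest even integer ≥ x. Let P_{n+1} be the path on vertices 0,1,…,n and let L be a color-list with |L(0)| = |L(n)| = b and |L(i)| = 2b + e for 1 ≤ i ≤ n−1. Then there exists an (L,b)-coloring of P_{n+1}, i.e., b-element sets c(i) ⊆ L(i) with c(i) ∩ c(i+1) = ∅ for all 0 ≤ i ≤ n−1. -/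
/-- `evenCeil x` is the smallest even integer `≥ x`. -/
def evenCeil (x : ℚ) : ℤ := 2 * ⌈x / 2⌉

namespace Stmt7Aux

open Finset

/-- Taboo sets, indexed by distance from vertex `n-1`:
`Sfun L n 0 = L n`, and `Sfun L n (m+1) = L (n-1-m) \ Sfun L n m`. -/
def Sfun (L : ℕ → Finset ℤ) (n : ℕ) : ℕ → Finset ℤ
  | 0 => L n
  | m + 1 => L (n - 1 - m) \ Sfun L n m

/-- Slack counters. -/
def rho (L : ℕ → Finset ℤ) (n b e : ℕ) : ℕ → ℤ
  | 0 => 0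
  | m + 1 => (b : ℤ) + e + rho L n b e m - ((Sfun L n m ∩ L (n - 1 - m)).card : ℤ)

lemma Scard (L : ℕ → Finset ℤ) (n b e : ℕ)
    (hcard : ∀ i, 1 ≤ i → i + 1 ≤ n → (L i).card = 2 * b + e)
    (m : ℕ) (hm : m + 2 ≤ n) :
    ((Sfun L n (m + 1)).card : ℤ) = (b : ℤ) - rho L n b e m + rho L n b e (m + 1) := by
  have hL : (L (n - 1 - m)).card = 2 * b + e := hcard _ (by omega) (by omega)
  have h := Finset.card_sdiff_add_card_inter (L (n - 1 - m)) (Sfun L n m)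
  rw [hL, Finset.inter_comm (L (n - 1 - m)) (Sfun L n m)] at h
  rw [Sfun, rho]
  omega

lemma rho_ge (L : ℕ → Finset ℤ) (n b e : ℕ)
    (hcard : ∀ i, 1 ≤ i → i + 1 ≤ n → (L i).card = 2 * b + e)
    (hLn : (L n).card = b) :
    ∀ m, m + 1 ≤ n → (e : ℤ) * (((m + 1) / 2 : ℕ) : ℤ) ≤ rho L n b e m := by
  intro m
  induction m using Nat.strong_induction_on with
  | _ m ih =>
    rcases m with _ | (_ | m)
    · intro _; simp [rho]
    · intro _
      have ht : (Sfun L n 0 ∩ L (n - 1 - 0)).card ≤ b := by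
        calc (Sfun L n 0 ∩ L (n - 1 - 0)).card ≤ (Sfun L n 0).card :=
              card_le_card inter_subset_left
          _ = b := hLn
      show (e : ℤ) * (((1 + 1) / 2 : ℕ) : ℤ) ≤ rho L n b e 1
      rw [show ((1 + 1) / 2 : ℕ) = 1 from rfl]
      rw [rho]
      rw [show rho L n b e 0 = 0 from rfl]
      omega
    · intro h
      have h1 := ih m (by omega) (by omega)
      have hS := Scard L n b e hcard m (by omega)
      have ht : ((Sfun L n (m + 1) ∩ L (n - 1 - (m + 1))).card : ℤ)
          ≤ ((Sfun L n (m + 1)).card : ℤ) := by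
        exact_mod_cast card_le_card inter_subset_left
      have hdiv : ((m + 2 + 1) / 2 : ℕ) = ((m + 1) / 2 : ℕ) + 1 := by omega
      rw [hdiv, rho, Nat.cast_add, Nat.cast_one]
      have hexp : (e : ℤ) * ((((m + 1) / 2 : ℕ) : ℤ) + 1)
          = (e : ℤ) * (((m + 1) / 2 : ℕ) : ℤ) + e := by ring
      rw [hexp]
      linarith

lemma choiceStep (P O : Finset ℤ) (hOP : O ⊆ P) (b : ℕ) (r : ℤ) (hr : 0 ≤ r)
    (hP : b ≤ P.card) (hO : (b : ℤ) - r ≤ (O.card : ℤ)) :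
    ∃ c : Finset ℤ, c ⊆ P ∧ c.card = b ∧ ((c \ O).card : ℤ) ≤ r := by
  obtain ⟨O', hO'O, hO'card⟩ := Finset.exists_subset_card_eq (min_le_right b O.card)
  have hO'b : O'.card ≤ b := by rw [hO'card]; exact min_le_left _ _
  obtain ⟨c, hO'c, hcP, hccard⟩ :=
    Finset.exists_subsuperset_card_eq (hO'O.trans hOP) hO'b hP
  refine ⟨c, hcP, hccard, ?_⟩
  have h1 : (c \ O).card ≤ (c \ O').card :=
    card_le_card (sdiff_subset_sdiff (Finset.Subset.refl _) hO'O)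
  have h2 : (c \ O').card = c.card - O'.card := card_sdiff_of_subset hO'c
  omega

lemma stepL (L : ℕ → Finset ℤ) (n b e : ℕ)
    (hcard : ∀ i, 1 ≤ i → i + 1 ≤ n → (L i).card = 2 * b + e)
    (hrnn : ∀ m, m + 1 ≤ n → 0 ≤ rho L n b e m)
    (i : ℕ) (h1 : 1 ≤ i) (h2 : i + 1 ≤ n)
    (prev : Finset ℤ) (hpb : prev.card = b)
    (hinv : ((prev ∩ Sfun L n (n - i)).card : ℤ) ≤ rho L n b e (n - i)) :
    ∃ cur : Finset ℤ, cur ⊆ L i ∧ cur.card = b ∧ Disjoint prev cur ∧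
      ((cur ∩ Sfun L n (n - 1 - i)).card : ℤ) ≤ rho L n b e (n - 1 - i) := by
  set m := n - 1 - i with hm
  have hmi : n - i = m + 1 := by omega
  have hvi : n - 1 - m = i := by omega
  have hSm1 : Sfun L n (m + 1) = L i \ Sfun L n m := by rw [Sfun, hvi]
  rw [hmi] at hinv
  have hLi : (L i).card = 2 * b + e := hcard i h1 h2
  have hScard := Scard L n b e hcard m (by omega)
  set P := L i \ prev with hP
  set O := Sfun L n (m + 1) \ prev with hO
  have hOP : O ⊆ P := by
    rw [hO, hP, hSm1]
    exact sdiff_subset_sdiff sdiff_subset (Finset.Subset.refl _)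
  have hPb : b ≤ P.card := by
    have h5 := Finset.le_card_sdiff prev (L i)
    rw [← hP] at h5
    omega
  have hOcard : (b : ℤ) - rho L n b e m ≤ (O.card : ℤ) := by
    have h3 := Finset.card_sdiff_add_card_inter (Sfun L n (m + 1)) prev
    rw [Finset.inter_comm (Sfun L n (m + 1)) prev] at h3
    rw [← hO] at h3
    omega
  obtain ⟨cur, hcP, hcb, hcO⟩ :=
    choiceStep P O hOP b (rho L n b e m) (hrnn m (by omega)) hPb hOcard
  have hsub : cur ∩ Sfun L n m ⊆ cur \ O := by
    intro x hx
    obtain ⟨hxc, hxS⟩ := Finset.mem_inter.mp hx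
    refine Finset.mem_sdiff.mpr ⟨hxc, ?_⟩
    intro hxO
    rw [hO, hSm1] at hxO
    exact (Finset.mem_sdiff.mp (Finset.mem_sdiff.mp hxO).1).2 hxS
  refine ⟨cur, hcP.trans sdiff_subset, hcb, ?_, ?_⟩
  · rw [Finset.disjoint_left]
    intro a ha hac
    exact (Finset.mem_sdiff.mp (hcP hac)).2 ha
  · have hle2 : ((cur ∩ Sfun L n m).card : ℤ) ≤ ((cur \ O).card : ℤ) := by
      exact_mod_cast card_le_card hsub
    exact le_trans hle2 hcO

lemma build (L : ℕ → Finset ℤ) (n b e : ℕ)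
    (hcard : ∀ i, 1 ≤ i → i + 1 ≤ n → (L i).card = 2 * b + e)
    (hL0 : (L 0).card = b)
    (hrnn : ∀ m, m + 1 ≤ n → 0 ≤ rho L n b e m)
    (hlast : (b : ℤ) ≤ rho L n b e (n - 1)) :
    ∀ j, j + 1 ≤ n → ∃ c : ℕ → Finset ℤ, c 0 = L 0 ∧
      ∀ i, 1 ≤ i → i ≤ j → (c i ⊆ L i ∧ (c i).card = b ∧
        Disjoint (c (i - 1)) (c i) ∧
        ((c i ∩ Sfun L n (n - 1 - i)).card : ℤ) ≤ rho L n b e (n - 1 - i)) := by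
  intro j
  induction j with
  | zero =>
    intro _
    exact ⟨fun _ => L 0, rfl, fun i h1 h2 => absurd (h1.trans h2) (by omega)⟩
  | succ j ihj =>
    intro hj
    obtain ⟨c, hc0, hc⟩ := ihj (by omega)
    have hcjb : (c j).card = b ∧
        ((c j ∩ Sfun L n (n - (j + 1))).card : ℤ) ≤ rho L n b e (n - (j + 1)) := by
      have hidx : n - (j + 1) = n - 1 - j := by omega
      rw [hidx]
      rcases Nat.eq_zero_or_pos j with rfl | hj0
      · refine ⟨by rw [hc0]; exact hL0, ?_⟩
        rw [hc0]
        calc ((L 0 ∩ Sfun L n (n - 1 - 0)).card : ℤ) ≤ ((L 0).card : ℤ) := by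
              exact_mod_cast card_le_card inter_subset_left
          _ = (b : ℤ) := by rw [hL0]
          _ ≤ rho L n b e (n - 1 - 0) := by rw [Nat.sub_zero]; exact hlast
      · obtain ⟨_, hcb, _, hci⟩ := hc j hj0 le_rfl
        exact ⟨hcb, hci⟩
    obtain ⟨cur, hcsub, hcb, hcd, hci⟩ :=
      stepL L n b e hcard hrnn (j + 1) (by omega) (by omega) (c j) hcjb.1 hcjb.2
    refine ⟨fun i => if i = j + 1 then cur else c i, ?_, ?_⟩
    · simp only [if_neg (show (0 : ℕ) ≠ j + 1 by omega)]
      exact hc0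
    · intro i hi1 hij
      by_cases hieq : i = j + 1
      · subst hieq
        simp only [if_pos rfl, if_neg (show j + 1 - 1 ≠ j + 1 by omega)]
        rw [show j + 1 - 1 = j from rfl]
        exact ⟨hcsub, hcb, hcd, hci⟩
      · have hij' : i ≤ j := by omega
        simp only [if_neg hieq, if_neg (show i - 1 ≠ j + 1 by omega)]
        exact hc i hi1 hij'

end Stmt7Aux

open Stmt7Aux Finset in
/-- if `n ≥ Even(2b/e)` and `L` is a color-list of the path
`P_{n+1}` with `|L(0)| = |L(n)| = b` and `|L(i)| = 2b+e` otherwise, then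
`P_{n+1}` is (L,b)-colorable. -/
theorem stmt7 (b e n : ℕ) (hb : 0 < b) (he : 0 < e) (hn : 0 < n)
    (hne : (n : ℤ) ≥ evenCeil ((2 * b : ℚ) / e))
    (L : Fin (n + 1) → Finset ℤ)
    (hL0 : (L 0).card = b) (hLn : (L (Fin.last n)).card = b)
    (hLi : ∀ i : Fin (n + 1), i ≠ 0 → i ≠ Fin.last n → (L i).card = 2 * b + e) :
    ∃ c : Fin (n + 1) → Finset ℤ,
      (∀ i, c i ⊆ L i ∧ (c i).card = b) ∧
      ∀ i : Fin n, Disjoint (c i.castSucc) (c i.succ) := by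
  classical
  have he' : (0 : ℚ) < e := by exact_mod_cast he
  have he0 : (e : ℚ) ≠ 0 := ne_of_gt he'
  set K : ℤ := ⌈(b : ℚ) / e⌉ with hK
  have hceil : evenCeil ((2 * b : ℚ) / e) = 2 * K := by
    unfold evenCeil
    rw [show ((2 * b : ℚ)) / e / 2 = (b : ℚ) / e by field_simp]
  have hK1 : 1 ≤ K := by
    have hpos : (0 : ℚ) < (b : ℚ) / e := by positivity
    have := Int.ceil_pos.mpr hpos
    omega
  have hnK : 2 * K ≤ (n : ℤ) := by rw [← hceil]; exact hne
  have hn2 : 2 ≤ n := by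
    have h2 : (2 : ℤ) ≤ (n : ℤ) := by linarith
    exact_mod_cast h2
  have hKt : ((K.toNat : ℤ)) = K := Int.toNat_of_nonneg (by linarith)
  have hbK : b ≤ e * K.toNat := by
    have hle := Int.le_ceil ((b : ℚ) / e)
    rw [div_le_iff₀ he'] at hle
    have h1 : (b : ℚ) ≤ (K.toNat : ℚ) * e := by
      rw [show ((K.toNat : ℚ)) = ((K : ℤ) : ℚ) by exact_mod_cast hKt]
      exact hle
    have h2 : b ≤ K.toNat * e := by exact_mod_cast h1
    exact le_trans h2 (le_of_eq (Nat.mul_comm _ _))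
  have hn2K : 2 * K.toNat ≤ n := by omega
  have hdiv : K.toNat ≤ n / 2 := by omega
  have hlastNum : (b : ℤ) ≤ (e : ℤ) * ((n / 2 : ℕ) : ℤ) := by
    have h3 : b ≤ e * (n / 2) := le_trans hbK (Nat.mul_le_mul_left e hdiv)
    exact_mod_cast h3
  -- the nat-indexed list function
  set L' : ℕ → Finset ℤ := fun j => L ⟨min j n, by omega⟩ with hL'
  have hL'eq : ∀ i : Fin (n + 1), L' (i : ℕ) = L i := by
    intro i
    simp only [hL']
    congr 1
    exact Fin.ext (Nat.min_eq_left (Nat.lt_succ_iff.mp i.isLt))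
  have h0 : L' 0 = L 0 := by
    simp only [hL']
    congr 1
  have hL'n : L' n = L (Fin.last n) := by
    simp only [hL']
    congr 1
    exact Fin.ext (by simp)
  have hcard : ∀ i, 1 ≤ i → i + 1 ≤ n → (L' i).card = 2 * b + e := by
    intro i h1 h2
    have heq : L' i = L ⟨i, by omega⟩ := by
      simp only [hL']
      congr 1
      exact Fin.ext (by simp; omega)
    rw [heq]
    refine hLi ⟨i, by omega⟩ ?_ ?_
    · intro hcon
      have := congrArg Fin.val hcon
      simp at this
      omega
    · intro hcon
      have := congrArg Fin.val hcon
      simp [Fin.val_last] at this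
      omega
  have hSn : (L' n).card = b := by rw [hL'n]; exact hLn
  have hrnn : ∀ m, m + 1 ≤ n → 0 ≤ rho L' n b e m := by
    intro m hm
    refine le_trans ?_ (rho_ge L' n b e hcard hSn m hm)
    positivity
  have hlast : (b : ℤ) ≤ rho L' n b e (n - 1) := by
    have h := rho_ge L' n b e hcard hSn (n - 1) (by omega)
    rw [show (n - 1 + 1) / 2 = n / 2 by omega] at h
    linarith
  obtain ⟨c, hc0, hc⟩ := build L' n b e hcard (by rw [h0]; exact hL0) hrnn hlast
    (n - 1) (by omega)
  refine ⟨fun i => if (i : ℕ) = n then L' n else c (i : ℕ), ?_, ?_⟩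
  · intro i
    by_cases hi : (i : ℕ) = n
    · have hieq : i = Fin.last n := Fin.ext (by simp [hi, Fin.val_last])
      simp only [if_pos hi]
      rw [hL'n, hieq]
      exact ⟨Finset.Subset.refl _, hLn⟩
    · simp only [if_neg hi]
      by_cases hi0 : (i : ℕ) = 0
      · have hieq : i = 0 := Fin.ext (by simp [hi0])
        rw [hi0, hc0, h0, hieq]
        exact ⟨Finset.Subset.refl _, hL0⟩
      · have h1 : 1 ≤ (i : ℕ) := by omega
        have h2 : (i : ℕ) ≤ n - 1 := by have := i.isLt; omega
        obtain ⟨hs, hcb, _, _⟩ := hc (i : ℕ) h1 h2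
        exact ⟨by rw [← hL'eq i]; exact hs, hcb⟩
  · intro i
    have hilt : (i : ℕ) < n := i.isLt
    simp only [Fin.coe_castSucc, Fin.val_succ]
    by_cases hlastE : (i : ℕ) + 1 = n
    · simp only [if_neg (show (i : ℕ) ≠ n by omega), if_pos hlastE]
      obtain ⟨_, _, _, hint⟩ := hc (i : ℕ) (by omega) (by omega)
      rw [show n - 1 - (i : ℕ) = 0 by omega] at hint
      rw [show Sfun L' n 0 = L' n from rfl,
        show rho L' n b e 0 = (0 : ℤ) from rfl] at hint
      have hcz : (c (i : ℕ) ∩ L' n).card = 0 := by omega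
      exact Finset.disjoint_iff_inter_eq_empty.mpr (Finset.card_eq_zero.mp hcz)
    · simp only [if_neg (show (i : ℕ) ≠ n by omega),
        if_neg (show (i : ℕ) + 1 ≠ n by omega)]
      obtain ⟨_, _, hdisj, _⟩ := hc ((i : ℕ) + 1) (by omega) (by omega)
      rw [show (i : ℕ) + 1 - 1 = (i : ℕ) from rfl] at hdisj
      exact hdisj
end

section
/- For all integers n ≥ 3 and positive integers a, b with a/b ≥ 2 + 1/⌊n/2⌋, the cycle C_n is free (a,b)-choosable: for every a-color-list L on C_n, every vertex v and every b-element set c₀ ⊆ L(v), there is an (L,b)-coloring c of C_n with c(v) = c₀. -/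
/-- Pick a `b`-subset of `S` meeting `E` in at most `e` elements. -/
lemma pick_lemma {b e : ℕ} (S E : Finset ℤ) (h1 : b ≤ S.card) (h2 : b ≤ (S \ E).card + e) :
    ∃ p, p ⊆ S ∧ p.card = b ∧ (p ∩ E).card ≤ e := by
  obtain ⟨p₁, hp₁S, hp₁card⟩ := (S \ E).exists_subset_card_eq (min_le_right b (S \ E).card)
  obtain ⟨p, hp₁p, hpS, hpcard⟩ := Finset.exists_subsuperset_card_eq
    (hp₁S.trans (Finset.sdiff_subset)) (by omega) h1
  refine ⟨p, hpS, hpcard, ?_⟩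
  have h3 : p₁ ⊆ p \ E := by
    intro x hx
    exact Finset.mem_sdiff.mpr ⟨hp₁p hx, (Finset.mem_sdiff.mp (hp₁S hx)).2⟩
  have h4 := Finset.card_le_card h3
  have h5 := Finset.card_inter_add_card_sdiff p E
  omega

section Chain

variable (c₀ : Finset ℤ) (Ms : ℕ → Finset ℤ) (b s : ℕ)

/-- `EE j` is the forbidden-set constraint for the `(j+1)`-st vertex of the chain. -/
def EE : ℕ → Finset ℤ
  | 0 => c₀
  | (j+1) => Ms (j+1) \ EE j

/-- `ee j` is the budget for the constraint at the `(j+1)`-st vertex of the chain. -/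
def ee : ℕ → ℕ
  | 0 => 0
  | (j+1) => ee j + (Ms (j+1) \ EE c₀ Ms j).card - b

/-- `sig j = ⌊j/2⌋ * s`. -/
def sig (j : ℕ) : ℕ := (j / 2) * s

lemma sig_add_two (j : ℕ) : sig s (j + 2) = sig s j + s := by
  unfold sig
  have h : (j + 2) / 2 = j / 2 + 1 := by omega
  rw [h, add_mul, one_mul]

lemma sig_one : sig s 1 = 0 := by simp [sig]

lemma sig_two : sig s 2 = s := by simp [sig]

variable (hc₀ : c₀.card = b) (hM : ∀ i, (Ms i).card = 2 * b + s)

include hc₀ hM in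
lemma chainBounds : ∀ j, sig s (j+1) ≤ ee c₀ Ms b j ∧
    b + sig s (j+2) ≤ ee c₀ Ms b j + (Ms (j+1) \ EE c₀ Ms j).card := by
  intro j
  induction j with
  | zero =>
    have h1 := Finset.le_card_sdiff c₀ (Ms 1)
    have h2 := hM 1
    have h3 := sig_one s
    have h4 := sig_two s
    have h5 : ee c₀ Ms b 0 = 0 := rfl
    have h6 : EE c₀ Ms 0 = c₀ := rfl
    constructor
    · show sig s 1 ≤ ee c₀ Ms b 0
      omega
    · show b + sig s 2 ≤ ee c₀ Ms b 0 + (Ms 1 \ EE c₀ Ms 0).card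
      rw [h5, h6]
      omega
  | succ j ih =>
    obtain ⟨ih1, ih2⟩ := ih
    have hX : (EE c₀ Ms (j+1)).card = (Ms (j+1) \ EE c₀ Ms j).card := rfl
    have hee : ee c₀ Ms b (j+1) = ee c₀ Ms b j + (Ms (j+1) \ EE c₀ Ms j).card - b := rfl
    have h1 := Finset.le_card_sdiff (EE c₀ Ms (j+1)) (Ms (j+2))
    have h2 := hM (j+2)
    have h3 := sig_add_two s (j+1)
    have h4 := sig_add_two s j
    have h5 : sig s (j+3) = sig s (j+1) + s := sig_add_two s (j+1)
    constructor
    · show sig s (j+2) ≤ ee c₀ Ms b (j+1)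
      omega
    · show b + sig s (j+3) ≤ ee c₀ Ms b (j+1) + (Ms (j+2) \ EE c₀ Ms (j+1)).card
      omega

include hc₀ hM in
lemma chain_color : ∀ j, ∀ p : Finset ℤ, p ⊆ Ms (j+1) → p.card = b →
    (p ∩ EE c₀ Ms j).card ≤ ee c₀ Ms b j →
    ∃ c : ℕ → Finset ℤ, c 0 = c₀ ∧ c (j+1) = p ∧
      (∀ i, 1 ≤ i → i ≤ j+1 → c i ⊆ Ms i ∧ (c i).card = b) ∧
      (∀ i, i ≤ j → Disjoint (c i) (c (i+1))) := by
  intro j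
  induction j with
  | zero =>
    intro p hpM hpcard hpE
    have hzero : (p ∩ EE c₀ Ms 0).card = 0 := by
      have h : ee c₀ Ms b 0 = 0 := rfl
      omega
    have hdisj : Disjoint c₀ p := by
      have h : p ∩ c₀ = ∅ := by
        have h2 : p ∩ EE c₀ Ms 0 = p ∩ c₀ := rfl
        rwa [h2, Finset.card_eq_zero] at hzero
      exact (Finset.disjoint_iff_inter_eq_empty.mpr h).symm
    refine ⟨fun i => if i = 0 then c₀ else p, by simp, by simp, ?_, ?_⟩
    · intro i hi1 hi2
      have : i = 1 := by omega
      subst this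
      simpa using ⟨hpM, hpcard⟩
    · intro i hi
      have : i = 0 := by omega
      subst this
      simpa using hdisj
  | succ j ih =>
    intro p hpM hpcard hpE
    have hScard : b ≤ (Ms (j+1) \ p).card := by
      have h1 := Finset.le_card_sdiff p (Ms (j+1))
      have h2 := hM (j+1)
      omega
    have hbudget : b ≤ ((Ms (j+1) \ p) \ EE c₀ Ms j).card + ee c₀ Ms b j := by
      have hcomm : (Ms (j+1) \ p) \ EE c₀ Ms j = (Ms (j+1) \ EE c₀ Ms j) \ p := by
        ext x
        simp only [Finset.mem_sdiff]
        tauto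
      have h5 := Finset.card_sdiff_add_card_inter (Ms (j+1) \ EE c₀ Ms j) p
      have h6 : (Ms (j+1) \ EE c₀ Ms j) ∩ p = p ∩ EE c₀ Ms (j+1) := by
        rw [Finset.inter_comm]; rfl
      have h6' : ((Ms (j+1) \ EE c₀ Ms j) ∩ p).card = (p ∩ EE c₀ Ms (j+1)).card := by
        rw [h6]
      have h7 : (p ∩ EE c₀ Ms (j+1)).card ≤ ee c₀ Ms b (j+1) := hpE
      have h8 := (chainBounds c₀ Ms b s hc₀ hM j).2
      have hee : ee c₀ Ms b (j+1) = ee c₀ Ms b j + (Ms (j+1) \ EE c₀ Ms j).card - b := rfl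
      have h9 := sig_add_two s j
      rw [hcomm]
      omega
    obtain ⟨p', hp'S, hp'card, hp'E⟩ := pick_lemma (Ms (j+1) \ p) (EE c₀ Ms j) hScard hbudget
    obtain ⟨c, hc0, hcj, hcmem, hcdisj⟩ :=
      ih p' (hp'S.trans Finset.sdiff_subset) hp'card hp'E
    refine ⟨fun i => if i = j+2 then p else c i, ?_, by simp, ?_, ?_⟩
    · simp only [if_neg (by omega : 0 ≠ j+2)]; exact hc0
    · intro i hi1 hi2
      by_cases h : i = j + 2
      · subst h; simpa using ⟨hpM, hpcard⟩
      · simp only [if_neg h]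
        exact hcmem i hi1 (by omega)
    · intro i hi
      by_cases h : i = j + 1
      · subst h
        simp only [if_neg (by omega : j+1 ≠ j+2), if_pos rfl, hcj]
        exact Finset.disjoint_left.mpr fun x hx => (Finset.mem_sdiff.mp (hp'S hx)).2
      · simp only [if_neg (by omega : i ≠ j+2), if_neg (by omega : i+1 ≠ j+2)]
        exact hcdisj i (by omega)

end Chain



set_option maxHeartbeats 2000000 in
/-- The merge lemma: find disjoint heads for the two chains. -/
lemma merge_lemma (b s e f β g : ℕ) (M N E F : Finset ℤ) (hE : E ⊆ M) (hF : F ⊆ N)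
    (hM : M.card = 2*b+s) (hN : N.card = 2*b+s)
    (h1 : E.card + β ≤ b + s + e) (h2 : b ≤ f + β) (hg : g + F.card = b + s + f) :
    ∃ p q : Finset ℤ, p ⊆ M ∧ q ⊆ N ∧ p.card = b ∧ q.card = b ∧ Disjoint p q ∧
      (p ∩ E).card ≤ e ∧ (q ∩ F).card ≤ f := by
  classical
  set G : Finset ℤ := (M ∩ N) \ F with hGdef
  set W : Finset ℤ := M \ (E ∪ G) with hWdef
  set X : Finset ℤ := E \ G with hXdef
  set Y : Finset ℤ := G \ E with hYdef
  set Z : Finset ℤ := E ∩ G with hZdef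
  have hGM : G ⊆ M := fun x hx => (Finset.mem_inter.mp (Finset.mem_sdiff.mp hx).1).1
  have hGN : G ⊆ N := fun x hx => (Finset.mem_inter.mp (Finset.mem_sdiff.mp hx).1).2
  have hEGM : E ∪ G ⊆ M := Finset.union_subset hE hGM
  -- cardinal bookkeeping
  have hq1 : (E ∪ G).card + Z.card = E.card + G.card := by
    rw [hZdef]; exact Finset.card_union_add_card_inter E G
  have hq2 : W.card + (E ∪ G).card = M.card := Finset.card_sdiff_add_card_eq_card hEGM
  have hq3 : X.card + Z.card = E.card := by
    rw [hXdef, hZdef]; exact Finset.card_sdiff_add_card_inter E G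
  have hq4 : Y.card + Z.card = G.card := by
    rw [hYdef, hZdef]
    have h := Finset.card_sdiff_add_card_inter G E
    rwa [Finset.inter_comm G E] at h
  have hq5 : F.card + G.card ≤ N.card := by
    have hdisj : Disjoint F G :=
      Finset.disjoint_left.mpr fun x hx hx' => (Finset.mem_sdiff.mp hx').2 hx
    have hsub : F ∪ G ⊆ N := Finset.union_subset hF hGN
    have := Finset.card_le_card hsub
    rwa [Finset.card_union_of_disjoint hdisj] at this
  -- the amounts
  obtain ⟨aW, aX, aY, aZ, hWle, hXle, hYle, hZle, hXe, hYg, hZe, hZg, hsum⟩ :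
      ∃ aW aX aY aZ : ℕ, aW ≤ W.card ∧ aX ≤ X.card ∧ aY ≤ Y.card ∧ aZ ≤ Z.card ∧
        aX ≤ e ∧ aY ≤ g ∧ aX + aZ ≤ e ∧ aY + aZ ≤ g ∧ aW + aX + aY + aZ = b := by
    refine ⟨min b W.card, min (b - min b W.card) (min X.card e), ?_⟩
    set aW := min b W.card with haW
    set aX := min (b - aW) (min X.card e) with haX
    refine ⟨min (b - aW - aX) (min Y.card g), ?_⟩
    set aY := min (b - aW - aX) (min Y.card g) with haY
    refine ⟨min (b - aW - aX - aY) (min Z.card (min (e - aX) (g - aY))), ?_⟩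
    omega
  -- pick the pieces
  obtain ⟨pW, hpWsub, hpWcard⟩ := W.exists_subset_card_eq hWle
  obtain ⟨pX, hpXsub, hpXcard⟩ := X.exists_subset_card_eq hXle
  obtain ⟨pY, hpYsub, hpYcard⟩ := Y.exists_subset_card_eq hYle
  obtain ⟨pZ, hpZsub, hpZcard⟩ := Z.exists_subset_card_eq hZle
  set p : Finset ℤ := pW ∪ (pX ∪ (pY ∪ pZ)) with hpdef
  -- region membership helpers
  have hmemW : ∀ x ∈ pW, x ∈ M ∧ x ∉ E ∧ x ∉ G := by
    intro x hx
    have := hpWsub hx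
    rw [hWdef, Finset.mem_sdiff, Finset.mem_union] at this
    tauto
  have hmemX : ∀ x ∈ pX, x ∈ E ∧ x ∉ G := by
    intro x hx
    have := hpXsub hx
    rw [hXdef, Finset.mem_sdiff] at this
    tauto
  have hmemY : ∀ x ∈ pY, x ∈ G ∧ x ∉ E := by
    intro x hx
    have := hpYsub hx
    rw [hYdef, Finset.mem_sdiff] at this
    tauto
  have hmemZ : ∀ x ∈ pZ, x ∈ E ∧ x ∈ G := by
    intro x hx
    have := hpZsub hx
    rw [hZdef, Finset.mem_inter] at this
    tauto
  have hpM : p ⊆ M := by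
    intro x hx
    rw [hpdef, Finset.mem_union, Finset.mem_union, Finset.mem_union] at hx
    rcases hx with h | h | h | h
    · exact (hmemW x h).1
    · exact hE (hmemX x h).1
    · exact hGM (hmemY x h).1
    · exact hE (hmemZ x h).1
  have hpcard : p.card = b := by
    have d1 : Disjoint pY pZ := Finset.disjoint_left.mpr fun x hx hx' =>
      (hmemY x hx).2 (hmemZ x hx').1
    have d2 : Disjoint pX (pY ∪ pZ) := Finset.disjoint_left.mpr (by
      intro x hx hx'
      rcases Finset.mem_union.mp hx' with h | h
      · exact (hmemY x h).2 (hmemX x hx).1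
      · exact (hmemX x hx).2 (hmemZ x h).2)
    have d3 : Disjoint pW (pX ∪ (pY ∪ pZ)) := Finset.disjoint_left.mpr (by
      intro x hx hx'
      rcases Finset.mem_union.mp hx' with h | h
      · exact (hmemW x hx).2.1 (hmemX x h).1
      rcases Finset.mem_union.mp h with h' | h'
      · exact (hmemW x hx).2.2 (hmemY x h').1
      · exact (hmemW x hx).2.1 (hmemZ x h').1)
    rw [hpdef, Finset.card_union_of_disjoint d3, Finset.card_union_of_disjoint d2,
      Finset.card_union_of_disjoint d1, hpWcard, hpXcard, hpYcard, hpZcard]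
    omega
  have hpE : (p ∩ E).card ≤ e := by
    have hsub : p ∩ E ⊆ pX ∪ pZ := by
      intro x hx
      obtain ⟨hxp, hxE⟩ := Finset.mem_inter.mp hx
      rw [hpdef, Finset.mem_union, Finset.mem_union, Finset.mem_union] at hxp
      rw [Finset.mem_union]
      rcases hxp with h | h | h | h
      · exact absurd hxE (hmemW x h).2.1
      · exact Or.inl h
      · exact absurd hxE (hmemY x h).2
      · exact Or.inr h
    calc (p ∩ E).card ≤ (pX ∪ pZ).card := Finset.card_le_card hsub
      _ ≤ pX.card + pZ.card := Finset.card_union_le _ _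
      _ ≤ e := by rw [hpXcard, hpZcard]; exact hZe
  have hpG : (p ∩ G).card ≤ g := by
    have hsub : p ∩ G ⊆ pY ∪ pZ := by
      intro x hx
      obtain ⟨hxp, hxG⟩ := Finset.mem_inter.mp hx
      rw [hpdef, Finset.mem_union, Finset.mem_union, Finset.mem_union] at hxp
      rw [Finset.mem_union]
      rcases hxp with h | h | h | h
      · exact absurd hxG (hmemW x h).2.2
      · exact absurd hxG (hmemX x h).2
      · exact Or.inl h
      · exact Or.inr h
    calc (p ∩ G).card ≤ (pY ∪ pZ).card := Finset.card_le_card hsub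
      _ ≤ pY.card + pZ.card := Finset.card_union_le _ _
      _ ≤ g := by rw [hpYcard, hpZcard]; exact hZg
  -- now pick q from N \ p
  have hq6 : b ≤ (N \ p).card := by
    have := Finset.le_card_sdiff p N
    omega
  have hq7 : b ≤ ((N \ p) \ F).card + f := by
    have hcomm : (N \ p) \ F = (N \ F) \ p := by
      ext x; simp only [Finset.mem_sdiff]; tauto
    have h5 := Finset.card_sdiff_add_card_inter (N \ F) p
    have h6 : (N \ F).card + F.card = N.card := Finset.card_sdiff_add_card_eq_card hF
    have h7 : ((N \ F) ∩ p).card ≤ g := by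
      refine le_trans (Finset.card_le_card ?_) hpG
      intro x hx
      obtain ⟨hxNF, hxp⟩ := Finset.mem_inter.mp hx
      obtain ⟨hxN, hxF⟩ := Finset.mem_sdiff.mp hxNF
      exact Finset.mem_inter.mpr ⟨hxp, Finset.mem_sdiff.mpr
        ⟨Finset.mem_inter.mpr ⟨hpM hxp, hxN⟩, hxF⟩⟩
    rw [hcomm]
    omega
  obtain ⟨q, hqsub, hqcard, hqF⟩ := pick_lemma (N \ p) F hq6 hq7
  refine ⟨p, q, hpM, hqsub.trans Finset.sdiff_subset, hpcard, hqcard, ?_, hpE, hqF⟩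
  exact Finset.disjoint_left.mpr fun x hx hx' => (Finset.mem_sdiff.mp (hqsub hx')).2 hx


/-- for `n ≥ 3` and `a/b ≥ 2 + 1/⌊n/2⌋`, the cycle `C_n` is
free (a,b)-choosable. -/
theorem stmt8 (n a b : ℕ) (hn : 3 ≤ n) (ha : 0 < a) (hb : 0 < b)
    (hab : (a : ℚ) / b ≥ 2 + 1 / ((n / 2 : ℕ) : ℚ)) :
    FreeChoosable (cycleGraph n) a b := by
  intro L hL v₀ c₀ hc₀L hc₀card
  haveI : NeZero n := ⟨by omega⟩
  haveI : Fact (1 < n) := ⟨by omega⟩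
  -- numeric setup
  have hk1 : 1 ≤ n / 2 := by omega
  have hkq : (0:ℚ) < ((n/2 : ℕ) : ℚ) := by exact_mod_cast hk1
  have hbq : (0:ℚ) < (b:ℚ) := by exact_mod_cast hb
  have hmul1 : (2 + 1/((n/2:ℕ):ℚ)) * b ≤ (a:ℚ) := by
    have h := mul_le_mul_of_nonneg_right hab (le_of_lt hbq)
    rwa [div_mul_cancel₀ _ (ne_of_gt hbq)] at h
  have hNat : 2*b*(n/2) + b ≤ a*(n/2) := by
    have h := mul_le_mul_of_nonneg_right hmul1 (le_of_lt hkq)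
    have heq : ((2 + 1/((n/2:ℕ):ℚ)) * b) * ((n/2:ℕ):ℚ) = 2*(b:ℚ)*((n/2:ℕ):ℚ) + b := by
      field_simp
    rw [heq] at h
    exact_mod_cast h
  have h2b : 2*b < a := by
    by_contra hcon
    push_neg at hcon
    have h := Nat.mul_le_mul_right (n/2) hcon
    nlinarith
  obtain ⟨s, has⟩ : ∃ s, a = 2*b + s := ⟨a - 2*b, by omega⟩
  have hs1 : 1 ≤ s := by omega
  have hbks : b ≤ (n/2) * s := by
    have h : a * (n/2) = 2*b*(n/2) + (n/2)*s := by rw [has]; ring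
    nlinarith
  -- choose chain lengths
  obtain ⟨al, ga, hal1, hga1, halga, hsplit⟩ :
      ∃ al ga : ℕ, 1 ≤ al ∧ 1 ≤ ga ∧ al + ga + 1 = n ∧ ga/2 + (al+1)/2 = n/2 := by
    by_cases h1 : n % 2 = 1
    · exact ⟨n/2, n - 1 - n/2, by omega, by omega, by omega, by omega⟩
    · by_cases h2 : (n/2) % 2 = 0
      · exact ⟨n/2 - 1, n - 1 - (n/2 - 1), by omega, by omega, by omega, by omega⟩
      · exact ⟨n/2 - 2, n - 1 - (n/2 - 2), by omega, by omega, by omega, by omega⟩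
  have hal' : al - 1 + 1 = al := by omega
  have hga' : ga - 1 + 1 = ga := by omega
  -- the two chains of lists
  set Ms : ℕ → Finset ℤ := fun i => L (v₀ + (i : ZMod n)) with hMs
  set Ns : ℕ → Finset ℤ := fun i => L (v₀ - (i : ZMod n)) with hNs
  have hMscard : ∀ i, (Ms i).card = 2*b + s := fun i => by rw [hMs, ← has]; exact hL _
  have hNscard : ∀ i, (Ns i).card = 2*b + s := fun i => by rw [hNs, ← has]; exact hL _
  -- chain bounds
  obtain ⟨hL1, hL2⟩ := chainBounds c₀ Ms b s hc₀card hMscard (al - 1)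
  obtain ⟨hR1, hR2⟩ := chainBounds c₀ Ns b s hc₀card hNscard (ga - 1)
  rw [hal'] at hL1 hL2
  rw [hga'] at hR1 hR2
  have hL2' : b + sig s (al + 1) ≤ ee c₀ Ms b (al - 1) + (Ms al \ EE c₀ Ms (al-1)).card := by
    have h : al - 1 + 2 = al + 1 := by omega
    rwa [h] at hL2
  have hR2' : b + sig s (ga + 1) ≤ ee c₀ Ns b (ga - 1) + (Ns ga \ EE c₀ Ns (ga-1)).card := by
    have h : ga - 1 + 2 = ga + 1 := by omega
    rwa [h] at hR2
  clear hL2 hR2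
  -- merge data
  set e := ee c₀ Ms b (al - 1) with he
  set f := ee c₀ Ns b (ga - 1) with hf
  set Eb : Finset ℤ := EE c₀ Ms (al - 1) ∩ Ms al with hEb
  set Fb : Finset ℤ := EE c₀ Ns (ga - 1) ∩ Ns ga with hFb
  have hEbcard : Eb.card + (Ms al \ EE c₀ Ms (al-1)).card = 2*b + s := by
    rw [hEb, Finset.inter_comm, ← hMscard al]
    exact Finset.card_inter_add_card_sdiff _ _
  have hFbcard : Fb.card + (Ns ga \ EE c₀ Ns (ga-1)).card = 2*b + s := by
    rw [hFb, Finset.inter_comm, ← hNscard ga]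
    exact Finset.card_inter_add_card_sdiff _ _
  have h1 : Eb.card + sig s (al+1) ≤ b + s + e := by omega
  have h2 : b ≤ f + sig s (al+1) := by
    have hkey : sig s ga + sig s (al+1) = (n/2) * s := by
      show (ga/2) * s + ((al+1)/2) * s = (n/2) * s
      rw [← add_mul, hsplit]
    have h3 := add_le_add hR1 (le_refl (sig s (al+1)))
    calc b ≤ (n/2) * s := hbks
      _ = sig s ga + sig s (al+1) := hkey.symm
      _ ≤ f + sig s (al+1) := h3
  have hFble : Fb.card ≤ b + s + f := by omega
  obtain ⟨g, hgeq⟩ : ∃ g, g + Fb.card = b + s + f := ⟨b + s + f - Fb.card, by omega⟩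
  -- apply the merge lemma
  obtain ⟨p, q, hpM, hqN, hpcard, hqcard, hpq, hpE, hqF⟩ :=
    merge_lemma b s e f (sig s (al+1)) g (Ms al) (Ns ga) Eb Fb
      Finset.inter_subset_right Finset.inter_subset_right
      (hMscard al) (hNscard ga) h1 h2 hgeq
  -- transfer constraints back to the chain constraint sets
  have hpE' : (p ∩ EE c₀ Ms (al-1)).card ≤ e := by
    refine le_trans (Finset.card_le_card ?_) hpE
    intro x hx
    obtain ⟨hxp, hxE⟩ := Finset.mem_inter.mp hx
    exact Finset.mem_inter.mpr ⟨hxp, Finset.mem_inter.mpr ⟨hxE, hpM hxp⟩⟩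
  have hqF' : (q ∩ EE c₀ Ns (ga-1)).card ≤ f := by
    refine le_trans (Finset.card_le_card ?_) hqF
    intro x hx
    obtain ⟨hxq, hxF⟩ := Finset.mem_inter.mp hx
    exact Finset.mem_inter.mpr ⟨hxq, Finset.mem_inter.mpr ⟨hxF, hqN hxq⟩⟩
  -- color the two chains
  obtain ⟨cL, hcL0, hcLal, hcLmem, hcLdisj⟩ :=
    chain_color c₀ Ms b s hc₀card hMscard (al - 1) p (by rwa [hal']) hpcard hpE'
  obtain ⟨cR, hcR0, hcRga, hcRmem, hcRdisj⟩ :=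
    chain_color c₀ Ns b s hc₀card hNscard (ga - 1) q (by rwa [hga']) hqcard hqF'
  rw [hal'] at hcLal hcLmem
  rw [hga'] at hcRga hcRmem
  -- assemble the coloring
  set Fc : ℕ → Finset ℤ := fun i => if i ≤ al then cL i else cR (n - i) with hFcdef
  set cc : ZMod n → Finset ℤ := fun v => Fc ((v - v₀).val) with hccdef
  have hccv : ∀ v : ZMod n, cc v = Fc ((v - v₀).val) := fun v => rfl
  have hFcL : ∀ i : ℕ, i ≤ al → Fc i = cL i := by
    intro i hi
    show (if i ≤ al then cL i else cR (n - i)) = cL i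
    rw [if_pos hi]
  have hFcR : ∀ i : ℕ, ¬ (i ≤ al) → Fc i = cR (n - i) := by
    intro i hi
    show (if i ≤ al then cL i else cR (n - i)) = cR (n - i)
    rw [if_neg hi]
  have hMsL : ∀ i : ℕ, Ms i = L (v₀ + (i : ZMod n)) := fun i => rfl
  have hNsL : ∀ i : ℕ, Ns i = L (v₀ - (i : ZMod n)) := fun i => rfl
  have hvertex : ∀ v : ZMod n, v₀ + (((v - v₀).val : ℕ) : ZMod n) = v := by
    intro v
    rw [ZMod.natCast_val, ZMod.cast_id]
    ring
  have hcast : ∀ i : ℕ, i < n → v₀ - ((n - i : ℕ) : ZMod n) = v₀ + (i : ZMod n) := by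
    intro i hi
    have h : ((n - i : ℕ) : ZMod n) = (n : ZMod n) - (i : ZMod n) := by
      push_cast [Nat.cast_sub (le_of_lt hi)]
      ring
    rw [h, ZMod.natCast_self]
    ring
  -- membership and cards
  have hmain : ∀ v, cc v ⊆ L v ∧ (cc v).card = b := by
    intro v
    have hin : (v - v₀).val < n := ZMod.val_lt _
    by_cases hcase : (v - v₀).val ≤ al
    · rw [hccv v, hFcL _ hcase]
      by_cases h0 : (v - v₀).val = 0
      · have hv : v = v₀ := by
          have h := hvertex v
          rw [h0] at h
          simpa using h.symm
        rw [h0, hcL0, hv]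
        exact ⟨hc₀L, hc₀card⟩
      · obtain ⟨hsub, hcard⟩ := hcLmem ((v - v₀).val) (by omega) hcase
        rw [hMsL, hvertex v] at hsub
        exact ⟨hsub, hcard⟩
    · rw [hccv v, hFcR _ hcase]
      obtain ⟨hsub, hcard⟩ := hcRmem (n - (v - v₀).val) (by omega) (by omega)
      rw [hNsL, hcast _ hin, hvertex v] at hsub
      exact ⟨hsub, hcard⟩
  -- disjointness along the cycle
  have hstep : ∀ v : ZMod n, Disjoint (cc v) (cc (v + 1)) := by
    intro v
    have hin : (v - v₀).val < n := ZMod.val_lt _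
    have hnext : (v + 1 - v₀).val = ((v - v₀).val + 1) % n := by
      have hrw : v + 1 - v₀ = (v - v₀) + 1 := by ring
      rw [hrw, ZMod.val_add, ZMod.val_one]
    by_cases hlast : (v - v₀).val + 1 = n
    · -- wrap-around edge
      have hmod : (v + 1 - v₀).val = 0 := by
        rw [hnext, hlast, Nat.mod_self]
      have h1 : cc (v + 1) = c₀ := by
        rw [hccv (v+1), hmod, hFcL 0 (Nat.zero_le al), hcL0]
      have hival : (v - v₀).val = n - 1 := by omega
      have h2 : cc v = cR 1 := by
        rw [hccv v, hival, hFcR (n-1) (by omega), show n - (n-1) = 1 by omega]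
      rw [h1, h2, ← hcR0]
      exact (hcRdisj 0 (by omega)).symm
    · have hnext' : (v + 1 - v₀).val = (v - v₀).val + 1 := by
        rw [hnext]
        exact Nat.mod_eq_of_lt (by omega)
      by_cases hsplit2 : (v - v₀).val + 1 ≤ al
      · rw [hccv v, hccv (v+1), hnext', hFcL _ (by omega), hFcL _ hsplit2]
        exact hcLdisj ((v - v₀).val) (by omega)
      · by_cases hA : (v - v₀).val ≤ al
        · -- the merge edge
          have hial : (v - v₀).val = al := by omega
          rw [hccv v, hccv (v+1), hnext', hial, hFcL al (le_refl al), hcLal,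
            hFcR (al+1) (by omega), show n - (al+1) = ga by omega, hcRga]
          exact hpq
        · -- inside the right chain
          rw [hccv v, hccv (v+1), hnext', hFcR _ hA, hFcR _ (by omega),
            show n - ((v - v₀).val + 1) = n - (v - v₀).val - 1 by omega]
          have h := hcRdisj (n - (v - v₀).val - 1) (by omega)
          rw [show n - (v - v₀).val - 1 + 1 = n - (v - v₀).val by omega] at h
          exact h.symm
  refine ⟨cc, ⟨fun v => (hmain v).1, fun v => (hmain v).2, ?_⟩, ?_⟩
  · intro v w hadj
    rw [cycleGraph, SimpleGraph.fromRel_adj] at hadj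
    obtain ⟨hne, hor⟩ := hadj
    rcases hor with h | h
    · rw [h]; exact hstep v
    · rw [h]; exact (hstep w).symm
  · rw [hccv v₀]
    rw [show (v₀ - v₀ : ZMod n) = 0 by ring, ZMod.val_zero, hFcL 0 (Nat.zero_le al), hcL0]
end

section
/- If b, e, n are positive integers with n ≥ Even(2b/e), then the cycle C_n is free (2b+e, b)-choosable. -/
open Finset

lemma choose_subset (A T : Finset ℤ) (b r : ℕ) (hA : b ≤ A.card)
    (h : b ≤ r ∨ b ≤ (A \ T).card + r) :
    ∃ c, c ⊆ A ∧ c.card = b ∧ (c ∩ T).card ≤ r := by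
  obtain ⟨s, hsA, hscard⟩ := Finset.exists_subset_card_eq
    (min_le_right b (A \ T).card)
  have hsb : s.card ≤ b := by rw [hscard]; exact min_le_left _ _
  obtain ⟨c, hsc, hcA, hccard⟩ := Finset.exists_subsuperset_card_eq
    (hsA.trans (sdiff_subset)) hsb hA
  refine ⟨c, hcA, hccard, ?_⟩
  have hdisj : Disjoint s T :=
    Finset.disjoint_left.2 fun x hx => (Finset.mem_sdiff.1 (hsA hx)).2
  have hsub : c ∩ T ⊆ c \ s := by
    intro x hx
    rw [Finset.mem_inter] at hx
    rw [Finset.mem_sdiff]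
    exact ⟨hx.1, fun hxs => Finset.disjoint_left.1 hdisj hxs hx.2⟩
  have h1 := Finset.card_le_card hsub
  rw [Finset.card_sdiff_of_subset hsc] at h1
  have hmin : min b (A \ T).card = (A \ T).card ∨ min b (A \ T).card = b := by omega
  omega

def pathF (b e k : ℕ) : ℕ := if k % 2 = 0 then b else min b (((k+1)/2) * e)

lemma pathF_le (b e k : ℕ) : pathF b e k ≤ b := by
  unfold pathF; split
  · exact le_rfl
  · exact min_le_left _ _

lemma pathF_succ_le (b e k : ℕ) (hk : 1 ≤ k) :
    pathF b e (k+1) ≤ e + pathF b e (k-1) := by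
  rcases Nat.even_or_odd k with ⟨m, hm⟩ | ⟨m, hm⟩
  · have hm1 : 1 ≤ m := by omega
    have h3 : (k+1+1)/2 = m + 1 := by omega
    have h4 : (k-1+1)/2 = m := by omega
    unfold pathF
    rw [if_neg (by omega), if_neg (by omega), h3, h4]
    have : (m+1)*e = m*e + e := by ring
    omega
  · unfold pathF
    rw [if_pos (by omega), if_pos (by omega)]
    omega

lemma path_coloring (b e : ℕ) (hb : 0 < b) (he : 0 < e) :
    ∀ k, 1 ≤ k → ∀ L : ℕ → Finset ℤ,
      b + e ≤ (L 1).card → (∀ i, 2 ≤ i → i ≤ k → 2*b + e ≤ (L i).card) →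
      ∀ T : Finset ℤ, ∀ r : ℕ,
        T.card ≤ r + pathF b e k → b ≤ r + pathF b e (k-1) →
        ∃ c : ℕ → Finset ℤ,
          (∀ i, 1 ≤ i → i ≤ k → c i ⊆ L i ∧ (c i).card = b) ∧
          (∀ i, 1 ≤ i → i + 1 ≤ k → Disjoint (c i) (c (i+1))) ∧
          (c k ∩ T).card ≤ r := by
  intro k hk
  induction k, hk using Nat.le_induction with
  | base =>
    intro L hL1 _ T r hT hbr
    have hf1 : pathF b e 1 = min b e := by unfold pathF; rw [if_neg (by omega)]; norm_num
    rw [hf1] at hT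
    have hcard : (L 1).card ≤ (L 1 \ T).card + T.card :=
      Finset.card_le_card_sdiff_add_card
    obtain ⟨c1, h1, h2, h3⟩ := choose_subset (L 1) T b r (by omega) (by omega)
    refine ⟨fun _ => c1, ?_, ?_, h3⟩
    · intro i hi1 hi2
      have : i = 1 := by omega
      subst this
      exact ⟨h1, h2⟩
    · intro i hi1 hi2; omega
  | succ k hk ih =>
    intro L hL1 hLi T r hT hbr
    have hbr' : b ≤ r + pathF b e k := by simpa using hbr
    have hcardL : 2*b + e ≤ (L (k+1)).card := hLi (k+1) (by omega) le_rfl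
    have hxT : (L (k+1)).card ≤ (L (k+1) \ T).card + T.card :=
      Finset.card_le_card_sdiff_add_card
    have hfb : pathF b e (k+1) ≤ b := pathF_le b e (k+1)
    have hfe : pathF b e (k+1) ≤ e + pathF b e (k-1) := pathF_succ_le b e k hk
    have hxr : b + e ≤ (L (k+1) \ T).card + r := by omega
    obtain ⟨c, hc1, hc2, hc3⟩ := ih L hL1
      (fun i h2 hik => hLi i h2 (by omega)) (L (k+1) \ T) ((L (k+1) \ T).card + r - b)
      (by omega) (by omega)
    have hck := hc1 k (by omega) le_rfl
    have hAcard : b + e ≤ (L (k+1) \ c k).card := by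
      have := Finset.card_le_card_sdiff_add_card (s := L (k+1)) (t := c k)
      omega
    have hAT : (L (k+1) \ c k) \ T = (L (k+1) \ T) \ c k := by
      ext z; simp only [Finset.mem_sdiff]; tauto
    have key : (L (k+1) \ T).card ≤ ((L (k+1) \ c k) \ T).card + ((L (k+1) \ T).card + r - b) := by
      rw [hAT]
      have h5 := Finset.card_sdiff_add_card_inter (L (k+1) \ T) (c k)
      have h6 : ((L (k+1) \ T) ∩ c k).card ≤ (L (k+1) \ T).card + r - b := by
        rw [Finset.inter_comm]; exact hc3
      omega
    obtain ⟨cn, hcnA, hcncard, hcnT⟩ := choose_subset (L (k+1) \ c k) T b r (by omega) (by omega)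
    refine ⟨fun i => if i = k+1 then cn else c i, ?_, ?_, ?_⟩
    · intro i hi1 hi2
      by_cases hik : i = k+1
      · subst hik; simp only [if_pos rfl]
        exact ⟨hcnA.trans (sdiff_subset), hcncard⟩
      · simp only [if_neg hik]
        exact hc1 i hi1 (by omega)
    · intro i hi1 hi2
      by_cases hik : i + 1 = k + 1
      · have hik' : i = k := by omega
        subst hik'
        simp only [if_neg (by omega : ¬ i = i + 1), if_pos rfl]
        exact ((Finset.sdiff_disjoint.mono_left hcnA).symm : Disjoint (c i) cn)
      · simp only [if_neg (by omega : ¬ i = k+1), if_neg hik]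
        exact hc2 i hi1 (by omega)
    · simp only [if_pos rfl]
      exact hcnT

lemma arith (b e n : ℕ) (hb : 0 < b) (he : 0 < e) (hn : 3 ≤ n)
    (hne : (n : ℤ) ≥ evenCeil ((2 * b : ℚ) / e)) :
    b ≤ pathF b e (n-1) ∧ b ≤ pathF b e (n-2) := by
  have he' : (0:ℚ) < e := by exact_mod_cast he
  have hdiv : ((2 * b : ℚ)) / e / 2 = (b:ℚ) / e := by
    field_simp
  rw [evenCeil, hdiv] at hne
  set m : ℤ := ⌈(b:ℚ)/e⌉ with hm
  have hmle : (b:ℚ)/e ≤ m := Int.le_ceil _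
  have hme : (b:ℤ) ≤ m * e := by
    have : (b:ℚ) ≤ (m:ℚ) * e := by
      rw [div_le_iff₀ he'] at hmle; exact hmle
    exact_mod_cast this
  have key : ∀ p : ℕ, m ≤ (p:ℤ) → b ≤ p * e := by
    intro p hp
    have : (b:ℤ) ≤ (p:ℤ) * e :=
      le_trans hme (mul_le_mul_of_nonneg_right hp (by positivity))
    exact_mod_cast this
  rcases Nat.even_or_odd n with ⟨p, hp⟩ | ⟨p, hp⟩
  · -- n even : pathF (n-1) = min b ((n/2)*e), pathF (n-2) = b
    have h1 : b ≤ p * e := key p (by omega)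
    constructor
    · unfold pathF
      rw [if_neg (by omega)]
      have : (n-1+1)/2 = p := by omega
      rw [this]; omega
    · unfold pathF; rw [if_pos (by omega)]
  · -- n odd
    have h1 : b ≤ p * e := key p (by omega)
    constructor
    · unfold pathF; rw [if_pos (by omega)]
    · unfold pathF
      rw [if_neg (by omega)]
      have : (n-2+1)/2 = p := by omega
      rw [this]; omega

/-- if `n ≥ Even(2b/e)` then `C_n` is free (2b+e,b)-choosable. -/
theorem stmt9 (b e n : ℕ) (hb : 0 < b) (he : 0 < e) (hn : 3 ≤ n)
    (hne : (n : ℤ) ≥ evenCeil ((2 * b : ℚ) / e)) :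
    FreeChoosable (cycleGraph n) (2 * b + e) b := by
  intro L hL v₀ c₀ hc₀sub hc₀card
  haveI : NeZero n := ⟨by omega⟩
  haveI : Fact (1 < n) := ⟨by omega⟩
  obtain ⟨hf1, hf2⟩ := arith b e n hb he hn hne
  set k := n - 1 with hkdef
  have hk1 : 1 ≤ k := by omega
  set Lp : ℕ → Finset ℤ :=
    fun i => if i = 1 then L (v₀ + 1) \ c₀ else L (v₀ + (i : ZMod n)) with hLp
  have hLp1 : b + e ≤ (Lp 1).card := by
    have h1 := Finset.card_le_card_sdiff_add_card (s := L (v₀ + 1)) (t := c₀)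
    have h2 := hL (v₀ + 1)
    simp only [hLp, if_pos rfl]
    omega
  have hLpi : ∀ i, 2 ≤ i → i ≤ k → 2*b + e ≤ (Lp i).card := by
    intro i h2 hik
    simp only [hLp, if_neg (by omega : ¬ i = 1)]
    exact (hL _).ge
  have hk2 : k - 1 = n - 2 := by omega
  obtain ⟨c, hc1, hc2, hc3⟩ := path_coloring b e hb he k hk1 Lp hLp1 hLpi c₀ 0
    (by omega) (by rw [hk2]; omega)
  -- index facts
  have hvval : ∀ v : ZMod n, v ≠ v₀ → 1 ≤ (v - v₀).val ∧ (v - v₀).val ≤ k ∧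
      v₀ + (((v - v₀).val : ℕ) : ZMod n) = v := by
    intro v hv
    have h0 : (v - v₀) ≠ 0 := sub_ne_zero.2 hv
    have h1 : (v - v₀).val ≠ 0 := fun h => h0 ((ZMod.val_eq_zero _).1 h)
    have h2 : (v - v₀).val < n := ZMod.val_lt _
    refine ⟨by omega, by omega, ?_⟩
    rw [ZMod.natCast_zmod_val]
    ring
  set C : ZMod n → Finset ℤ := fun v => if v = v₀ then c₀ else c (v - v₀).val with hC
  have hCsub : ∀ v, C v ⊆ L v := by
    intro v
    by_cases hv : v = v₀
    · simp only [hC, if_pos hv, hv]; exact hc₀sub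
    · obtain ⟨ha, hbk, hc⟩ := hvval v hv
      simp only [hC, if_neg hv]
      have := (hc1 _ ha hbk).1
      by_cases h1 : (v - v₀).val = 1
      · rw [h1] at this hc ⊢
        simp only [hLp, if_pos rfl] at this
        refine (this.trans (sdiff_subset)).trans ?_
        rw [Nat.cast_one] at hc
        rw [hc]
      · simp only [hLp, if_neg h1] at this
        rw [hc] at this
        exact this
  have hCcard : ∀ v, (C v).card = b := by
    intro v
    by_cases hv : v = v₀
    · simp only [hC, if_pos hv]; exact hc₀card
    · obtain ⟨ha, hbk, _⟩ := hvval v hv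
      simp only [hC, if_neg hv]
      exact (hc1 _ ha hbk).2
  have hlast : Disjoint (c k) c₀ := by
    rw [Finset.disjoint_iff_inter_eq_empty]
    exact Finset.card_eq_zero.1 (Nat.le_zero.1 hc3)
  have hC1 : Disjoint c₀ (c 1) := by
    have := (hc1 1 le_rfl hk1).1
    simp only [hLp, if_pos rfl] at this
    exact (Finset.sdiff_disjoint.mono_left this).symm
  have hstep : ∀ v w : ZMod n, v ≠ w → w = v + 1 → Disjoint (C v) (C w) := by
    intro v w hvw hw
    by_cases hv0 : v = v₀
    · have hw0 : w ≠ v₀ := fun h => hvw (by rw [h, hv0])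
      have hwv : w - v₀ = 1 := by rw [hw, hv0]; ring
      simp only [hC, if_pos hv0, if_neg hw0, hwv, ZMod.val_one]
      exact hC1
    · by_cases hw0 : w = v₀
      · have hvv : v - v₀ = -1 := by
          rw [hw0] at hw
          rw [show v = v₀ - 1 by rw [hw]; ring]
          ring
        have hval : (-1 : ZMod n).val = n - 1 := by
          have h1 : ((n - 1 : ℕ) : ZMod n) = -1 := by
            push_cast [Nat.cast_sub (by omega : 1 ≤ n)]
            rw [ZMod.natCast_self]; ring
          rw [← h1, ZMod.val_cast_of_lt (by omega)]
        simp only [hC, if_neg hv0, if_pos hw0, hvv, hval]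
        exact hlast
      · obtain ⟨ha, hbk, _⟩ := hvval v hv0
        obtain ⟨ha', hbk', _⟩ := hvval w hw0
        have hsub1 : w - v₀ = (v - v₀) + 1 := by rw [hw]; ring
        have hval : (w - v₀).val = ((v - v₀).val + 1) % n := by
          rw [hsub1, ZMod.val_add, ZMod.val_one]
        have hne' : (v - v₀).val ≠ n - 1 := by
          intro h
          have h9 : (w - v₀).val = 0 := by
            rw [hval, h, show n - 1 + 1 = n by omega, Nat.mod_self]
          omega
        have hval' : (w - v₀).val = (v - v₀).val + 1 := by
          rw [hval, Nat.mod_eq_of_lt (by omega)]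
        simp only [hC, if_neg hv0, if_neg hw0, hval']
        exact hc2 _ ha (by omega)
  refine ⟨C, ⟨hCsub, hCcard, ?_⟩, by simp only [hC, if_pos rfl]⟩
  intro v w hadj
  rw [cycleGraph, SimpleGraph.fromRel_adj] at hadj
  obtain ⟨hne', h | h⟩ := hadj
  · exact hstep v w hne' h
  · exact (hstep w v (Ne.symm hne') h).symm
end

section
/- Let G be a unicyclic graph (a connected graph with exactly one cycle) whose cycle has length g, and let a, b be positive integers with a/b ≥ 2 + 1/⌊g/2⌋. Then G is free (a,b)-choosable. -/
open Finset

open Finset in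

lemma pick_lemma_s13 (S A : Finset ℤ) (b : ℕ) (r : ℤ) (hr : 0 ≤ r)
    (hb : b ≤ S.card) (h : (b:ℤ) - r ≤ ((S \ A).card : ℤ)) :
    ∃ c, c ⊆ S ∧ c.card = b ∧ ((c ∩ A).card : ℤ) ≤ r := by
  set u := min b (S \ A).card with hu
  obtain ⟨X, hXsub, hXcard⟩ := Finset.exists_subset_card_eq (n := u) (s := S \ A)
    (by simp [hu])
  have hXS : X ⊆ S := hXsub.trans sdiff_subset
  obtain ⟨c, hXc, hcS, hccard⟩ := Finset.exists_subsuperset_card_eq hXS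
    (by simp [hXcard, hu]) hb
  refine ⟨c, hcS, hccard, ?_⟩
  have h1 : c ∩ A ⊆ c \ X := by
    intro x hx
    simp only [mem_inter] at hx
    simp only [mem_sdiff]
    refine ⟨hx.1, fun hxX => ?_⟩
    have := hXsub hxX
    simp only [mem_sdiff] at this
    exact this.2 hx.2
  have h2 : (c ∩ A).card ≤ b - u := by
    have := Finset.card_le_card h1
    rwa [Finset.card_sdiff_of_subset hXc, hccard, hXcard] at this
  have : ((c ∩ A).card : ℤ) ≤ (b : ℤ) - u := by
    have hub : u ≤ b := min_le_left _ _
    omega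
  rcases le_or_gt (b : ℕ) ((S \ A).card) with hc | hc
  · have : u = b := by simp [hu, hc]
    omega
  · have : u = (S \ A).card := by simp [hu]; omega
    omega

lemma cycle_color (n b d : ℕ) (hn : 3 ≤ n) (hd : 1 ≤ d) (hb : 1 ≤ b)
    (hkd : b ≤ (n / 2) * d)
    (a : ℕ) (haeq : a = 2*b + d) (ℓ : ℕ → Finset ℤ) (hcard : ∀ i, (ℓ i).card = a)
    (c₀ : Finset ℤ) (hc₀ : c₀ ⊆ ℓ 0) (hc₀b : c₀.card = b) :
    ∃ c : ℕ → Finset ℤ, c 0 = c₀ ∧ (∀ i, i ≤ n - 1 → c i ⊆ ℓ i ∧ (c i).card = b) ∧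
      (∀ i, i < n - 1 → Disjoint (c i) (c (i+1))) ∧ Disjoint (c (n-1)) c₀ := by
  obtain ⟨m, hm⟩ : ∃ m, m = n - 1 := ⟨n - 1, rfl⟩
  have hm2 : 2 ≤ m := by omega
  obtain ⟨B, ρ, hB0, hBsucc, hρ0, hρsucc⟩ :
      ∃ (B : ℕ → Finset ℤ) (ρ : ℕ → ℤ), B 0 = ℓ m ∩ c₀ ∧
        (∀ j, B (j+1) = ℓ (m-1-j) ∩ (ℓ (m-j) \ B j)) ∧ ρ 0 = 0 ∧
        (∀ j, ρ (j+1) = (b:ℤ) + d - (B j).card + ρ j) := by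
    refine ⟨fun j => (Nat.rec (ℓ m ∩ c₀, (0:ℤ))
      (fun j p => (ℓ (m-1-j) ∩ (ℓ (m-j) \ p.1), ((b:ℤ) + d - p.1.card + p.2))) j : Finset ℤ × ℤ).1,
      fun j => (Nat.rec (ℓ m ∩ c₀, (0:ℤ))
      (fun j p => (ℓ (m-1-j) ∩ (ℓ (m-j) \ p.1), ((b:ℤ) + d - p.1.card + p.2))) j : Finset ℤ × ℤ).2,
      rfl, fun j => rfl, rfl, fun j => rfl⟩
  have hBsub : ∀ j, B j ⊆ ℓ (m - j) := by
    intro j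
    cases j with
    | zero => rw [hB0]; exact inter_subset_left
    | succ j =>
      rw [hBsucc]
      have : m - 1 - j = m - (j+1) := by omega
      rw [this]
      exact inter_subset_left
  have hBcard : ∀ j, ((B (j+1)).card : ℤ) ≤ (a:ℤ) - (B j).card := by
    intro j
    have h1 : B (j+1) ⊆ ℓ (m-j) \ B j := by rw [hBsucc]; exact inter_subset_right
    have h2 := Finset.card_le_card h1
    have h3 : (ℓ (m-j) \ B j).card = a - (B j).card := by
      rw [Finset.card_sdiff_of_subset (hBsub j), hcard]
    have h4 : (B j).card ≤ a := by
      have := Finset.card_le_card (hBsub j); rwa [hcard] at this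
    omega
  obtain ⟨D, hD⟩ : ∃ D : ℕ → ℤ, D = fun j => ((B j).card : ℤ) - ρ j := ⟨_, rfl⟩
  have hDdef : ∀ j, D j = ((B j).card : ℤ) - ρ j := fun j => by rw [hD]
  have hρD : ∀ j, ρ (j+1) = (b:ℤ) + d - D j := by
    intro j; rw [hρsucc, hDdef]; ring
  have hDsucc : ∀ j, D (j+1) ≤ (b:ℤ) - ρ j := by
    intro j
    rw [hDdef, hρsucc]
    have : ((B (j+1)).card : ℤ) ≤ (a:ℤ) - (B j).card := hBcard j
    have ha' : (a : ℤ) = 2*b + d := by exact_mod_cast congrArg (Nat.cast : ℕ → ℤ) haeq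
    omega
  have hpos : ∀ j, 0 ≤ ρ j ∧ D j ≤ (b:ℤ) := by
    intro j
    induction j with
    | zero =>
      constructor
      · rw [hρ0]
      · rw [hDdef, hρ0, hB0]
        have : (ℓ m ∩ c₀).card ≤ c₀.card := Finset.card_le_card inter_subset_right
        have : (ℓ m ∩ c₀).card ≤ b := this.trans_eq hc₀b
        simp only [sub_zero]
        exact_mod_cast this
    | succ j ih =>
      constructor
      · rw [hρD]
        have : (0:ℤ) ≤ d := by exact_mod_cast Nat.zero_le d
        linarith [ih.2]
      · have := hDsucc j
        linarith [ih.1]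
  have hstep : ∀ j, D (j+2) ≤ D j - d := by
    intro j
    have h1 := hDsucc (j+1)
    have h2 := hρD j
    linarith
  have hiter : ∀ t j, D (j + 2*t) ≤ D j - t * d := by
    intro t
    induction t with
    | zero => intro j; simp
    | succ t ih =>
      intro j
      have h1 := ih (j+2)
      have h2 := hstep j
      have : j + 2*(t+1) = (j + 2) + 2*t := by ring
      rw [this]
      push_cast
      push_cast at h1
      linarith
  have hD0 : D 0 ≤ (b:ℤ) := (hpos 0).2
  have hD1 : D 1 ≤ (b:ℤ) := by
    have := hDsucc 0; rw [hρ0] at this; norm_num at this; exact this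
  have hfin : D (m-1) ≤ (d:ℤ) := by
    rcases Nat.even_or_odd (m-1) with ⟨t, ht⟩ | ⟨t, ht⟩
    · -- m - 1 = 2t, n = 2t+2
      have hk : n / 2 = t + 1 := by omega
      have h1 : D (m-1) ≤ D 0 - t * d := by
        have := hiter t 0; rwa [show 0 + 2*t = m - 1 by omega] at this
      have hkd' : (b:ℤ) ≤ (t+1) * d := by
        have : b ≤ (t+1) * d := by rw [← hk]; exact hkd
        exact_mod_cast this
      push_cast at h1 hkd' ⊢
      nlinarith
    · -- m - 1 = 2t+1, n = 2t+3
      have hk : n / 2 = t + 1 := by omega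
      have h1 : D (m-1) ≤ D 1 - t * d := by
        have := hiter t 1; rwa [show 1 + 2*t = m - 1 by omega] at this
      have hkd' : (b:ℤ) ≤ (t+1) * d := by
        have : b ≤ (t+1) * d := by rw [← hk]; exact hkd
        exact_mod_cast this
      push_cast at h1 hkd' ⊢
      nlinarith
  -- forward data
  obtain ⟨A, hA⟩ : ∃ A : ℕ → Finset ℤ, A = fun i => B (m - i) := ⟨_, rfl⟩
  obtain ⟨r, hr⟩ : ∃ r : ℕ → ℤ, r = fun i => ρ (m - i) := ⟨_, rfl⟩
  have hAdef : ∀ i, A i = B (m - i) := fun i => by rw [hA]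
  have hrdef : ∀ i, r i = ρ (m - i) := fun i => by rw [hr]
  have hA_sub : ∀ i, 1 ≤ i → i ≤ m → A i ⊆ ℓ i := by
    intro i h1 h2
    rw [hAdef]
    have := hBsub (m - i)
    rwa [show m - (m - i) = i by omega] at this
  have hA_rec : ∀ i, 1 ≤ i → i < m →
      A i = ℓ i ∩ (ℓ (i+1) \ A (i+1)) ∧ r i = (b:ℤ) + d - (A (i+1)).card + r (i+1) := by
    intro i h1 h2
    have hj : m - i = (m - i - 1) + 1 := by omega
    constructor
    · rw [hAdef, hAdef, hj, hBsucc]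
      rw [show m - 1 - (m - i - 1) = i by omega, show m - (m - i - 1) = i + 1 by omega,
        show m - (i+1) = m - i - 1 by omega]
    · rw [hrdef, hrdef, hAdef, hj, hρsucc]
      rw [show m - (i+1) = m - i - 1 by omega]
  have hr_nonneg : ∀ i, 0 ≤ r i := fun i => by rw [hrdef]; exact (hpos _).1
  have hrm : r m = 0 := by rw [hrdef, Nat.sub_self, hρ0]
  have hAm : A m = ℓ m ∩ c₀ := by rw [hAdef, Nat.sub_self, hB0]
  have hA1D : ((A 1).card : ℤ) - r 1 ≤ d := by
    rw [hAdef, hrdef, ← hDdef]; exact hfin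
  have hab2 : b ≤ a - b := by omega
  -- step 1
  have hstep1 : ∃ c1, c1 ⊆ ℓ 1 \ c₀ ∧ c1.card = b ∧ ((c1 ∩ A 1).card : ℤ) ≤ r 1 := by
    apply pick_lemma_s13 _ _ _ _ (hr_nonneg 1)
    · -- b ≤ card (ℓ 1 \ c₀)
      have h1 : (ℓ 1).card - c₀.card ≤ (ℓ 1 \ c₀).card := le_card_sdiff _ _
      rw [hcard, hc₀b] at h1
      omega
    · -- (b:ℤ) - r 1 ≤ card ((ℓ 1 \ c₀) \ A 1)
      have h1 : (ℓ 1 \ c₀).card - (A 1).card ≤ ((ℓ 1 \ c₀) \ A 1).card := le_card_sdiff _ _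
      have h2 : (ℓ 1).card - c₀.card ≤ (ℓ 1 \ c₀).card := le_card_sdiff _ _
      rw [hcard, hc₀b] at h2
      have h3 : (A 1).card ≤ (ℓ 1).card := Finset.card_le_card (hA_sub 1 le_rfl (by omega))
      rw [hcard] at h3
      have := hA1D
      have hr1 := hr_nonneg 1
      omega
  -- generic step
  have hstepG : ∀ i, 1 ≤ i → i < m → ∀ prev : Finset ℤ, prev ⊆ ℓ i → prev.card = b →
      ((prev ∩ A i).card : ℤ) ≤ r i →
      ∃ nxt, nxt ⊆ ℓ (i+1) \ prev ∧ nxt.card = b ∧ ((nxt ∩ A (i+1)).card : ℤ) ≤ r (i+1) := by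
    intro i h1 h2 prev hsub hcardp hcnt
    obtain ⟨hrecA, hrecr⟩ := hA_rec i h1 h2
    apply pick_lemma_s13 _ _ _ _ (hr_nonneg (i+1))
    · have h3 : (ℓ (i+1)).card - prev.card ≤ (ℓ (i+1) \ prev).card := le_card_sdiff _ _
      rw [hcard, hcardp] at h3
      omega
    · -- (b:ℤ) - r (i+1) ≤ card ((ℓ (i+1) \ prev) \ A (i+1))
      have e1 : (ℓ (i+1) \ prev) \ A (i+1) = (ℓ (i+1) \ A (i+1)) \ prev := by
        ext x; simp only [mem_sdiff]; tauto
      have e2 : ((ℓ (i+1) \ A (i+1)) \ prev).card + ((ℓ (i+1) \ A (i+1)) ∩ prev).card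
          = (ℓ (i+1) \ A (i+1)).card := Finset.card_sdiff_add_card_inter _ _
      have hAsub : A (i+1) ⊆ ℓ (i+1) := hA_sub (i+1) (by omega) (by omega)
      have e3 : (ℓ (i+1) \ A (i+1)).card + (A (i+1)).card = (ℓ (i+1)).card :=
        Finset.card_sdiff_add_card_eq_card hAsub
      have e4 : (ℓ (i+1) \ A (i+1)) ∩ prev = prev ∩ A i := by
        ext x
        rw [hrecA]
        simp only [mem_inter, mem_sdiff]
        constructor
        · rintro ⟨⟨h5, h6⟩, hp⟩; exact ⟨hp, hsub hp, h5, h6⟩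
        · rintro ⟨hp, _, h5, h6⟩; exact ⟨⟨h5, h6⟩, hp⟩
      have hcA : ((prev ∩ A i).card : ℤ) ≤ (b:ℤ) + d - (A (i+1)).card + r (i+1) := by
        rw [← hrecr]; exact hcnt
      have hacast : ((ℓ (i+1)).card : ℤ) = 2*(b:ℤ) + d := by
        rw [hcard]; exact_mod_cast congrArg (Nat.cast : ℕ → ℤ) haeq
      rw [e1]
      rw [e4] at e2
      omega
  -- build the sequence
  have build : ∀ i, 1 ≤ i → i ≤ m → ∃ c : ℕ → Finset ℤ, c 0 = c₀ ∧
      ∀ j, 1 ≤ j → j ≤ i →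
        c j ⊆ ℓ j \ c (j-1) ∧ (c j).card = b ∧ ((c j ∩ A j).card : ℤ) ≤ r j := by
    intro i
    induction i with
    | zero => omega
    | succ i ih =>
      intro _ hile
      rcases Nat.eq_zero_or_pos i with hi0 | hipos
      · subst hi0
        obtain ⟨c1, hc1⟩ := hstep1
        refine ⟨fun j => if j = 0 then c₀ else c1, by simp, ?_⟩
        intro j hj1 hj2
        have : j = 1 := by omega
        subst this
        simpa using hc1
      · obtain ⟨c, hc0, hcp⟩ := ih hipos (by omega)
        have hci := hcp i hipos le_rfl
        have hsubi : c i ⊆ ℓ i := hci.1.trans sdiff_subset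
        obtain ⟨nxt, hn1, hn2, hn3⟩ := hstepG i hipos (by omega) (c i) hsubi hci.2.1 hci.2.2
        refine ⟨Function.update c (i+1) nxt, ?_, ?_⟩
        · rw [Function.update_of_ne (by omega)]; exact hc0
        · intro j hj1 hj2
          rcases Nat.lt_or_ge j (i+1) with hj | hj
          · rw [Function.update_of_ne (by omega), Function.update_of_ne (by omega)]
            exact hcp j hj1 (by omega)
          · have : j = i + 1 := by omega
            subst this
            rw [Function.update_self, Function.update_of_ne (by omega)]
            simpa using ⟨hn1, hn2, hn3⟩
  obtain ⟨c, hc0, hcp⟩ := build m (by omega) le_rfl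
  refine ⟨c, hc0, ?_, ?_, ?_⟩
  · rw [show n - 1 = m from hm.symm]
    intro i hi
    rcases Nat.eq_zero_or_pos i with h0 | hpos'
    · subst h0; rw [hc0]; exact ⟨hc₀, hc₀b⟩
    · have := hcp i hpos' (by omega)
      exact ⟨this.1.trans sdiff_subset, this.2.1⟩
  · rw [show n - 1 = m from hm.symm]
    intro i hi
    have := hcp (i+1) (by omega) (by omega)
    have h1 : c (i+1) ⊆ ℓ (i+1) \ c i := by simpa using this.1
    have h2 : Disjoint (ℓ (i+1) \ c i) (c i) := sdiff_disjoint
    exact (h2.mono_left h1).symm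
  · rw [show n - 1 = m from hm.symm]
    have := hcp m (by omega) le_rfl
    have hsubm : c m ⊆ ℓ m := this.1.trans sdiff_subset
    have hcnt : ((c m ∩ A m).card : ℤ) ≤ 0 := by rw [← hrm]; exact this.2.2
    have hempty : c m ∩ A m = ∅ := by
      have : (c m ∩ A m).card = 0 := by omega
      exact Finset.card_eq_zero.mp this
    rw [Finset.disjoint_left]
    intro x hx hx0
    have : x ∈ c m ∩ A m := by
      rw [hAm]
      simp only [mem_inter]
      exact ⟨hx, hsubm hx, hx0⟩
    rw [hempty] at this
    simp at this

namespace Stm13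

variable {V : Type*} {G : SimpleGraph V}

lemma getVert_eq_support_getElem {u v : V} (w : G.Walk u v) {i : ℕ} (h : i ≤ w.length) :
    w.getVert i = w.support[i]'(by rw [SimpleGraph.Walk.length_support]; omega) := by
  induction w generalizing i with
  | nil =>
    have : i = 0 := by simpa using h
    subst this; simp
  | cons hadj p ih =>
    cases i with
    | zero => simp
    | succ i =>
      simp only [SimpleGraph.Walk.support_cons, List.getElem_cons_succ,
        SimpleGraph.Walk.getVert_cons_succ]
      exact ih (by simpa using h)

lemma cycle_getVert_injOn {u : V} {w : G.Walk u u} (hw : w.IsCycle) :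
    ∀ i ≤ w.length - 1, ∀ j ≤ w.length - 1, w.getVert i = w.getVert j → i = j := by
  have hnd : w.support.tail.Nodup := hw.support_nodup
  have h3 : 3 ≤ w.length := hw.three_le_length
  have hsl : w.support.length = w.length + 1 := SimpleGraph.Walk.length_support w
  have htl : w.support.tail.length = w.length := by
    rw [List.length_tail, hsl]; omega
  have hTail : ∀ i : ℕ, (hi : i < w.length) →
      w.support.tail[i]'(by omega) = w.getVert (i+1) := by
    intro i hi
    have h1 := w.support.get_tail i (by rw [htl]; omega)
    simp only [List.get_eq_getElem] at h1
    rw [getVert_eq_support_getElem w (by omega), ← h1]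
  -- the last entry of tail is u
  have hlast : w.support.tail[w.length - 1]'(by omega) = u := by
    rw [hTail (w.length - 1) (by omega), show w.length - 1 + 1 = w.length by omega]
    exact w.getVert_length
  intro i hi j hj hij
  rcases Nat.eq_zero_or_pos i with h0 | hip
  · rcases Nat.eq_zero_or_pos j with j0 | hjp
    · omega
    · exfalso
      subst h0
      rw [SimpleGraph.Walk.getVert_zero] at hij
      have : w.support.tail[j-1]'(by omega) = u := by
        rw [hTail (j-1) (by omega), show j - 1 + 1 = j by omega]; exact hij.symm
      have := (hnd.getElem_inj_iff).mp (this.trans hlast.symm)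
      omega
  · rcases Nat.eq_zero_or_pos j with j0 | hjp
    · exfalso
      subst j0
      rw [SimpleGraph.Walk.getVert_zero] at hij
      have : w.support.tail[i-1]'(by omega) = u := by
        rw [hTail (i-1) (by omega), show i - 1 + 1 = i by omega]; exact hij
      have := (hnd.getElem_inj_iff).mp (this.trans hlast.symm)
      omega
    · have e1 : w.support.tail[i-1]'(by omega) = w.support.tail[j-1]'(by omega) := by
        rw [hTail (i-1) (by omega), hTail (j-1) (by omega),
          show i - 1 + 1 = i by omega, show j - 1 + 1 = j by omega]
        exact hij
      have := (hnd.getElem_inj_iff).mp e1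
      omega

end Stm13

namespace Stm13
variable {V : Type*} {G : SimpleGraph V}

lemma walk_boundary {W : Finset V} [DecidableEq V] :
    ∀ (x y : V) (p : G.Walk x y), x ∈ W → y ∉ W →
      ∃ x' ∈ W, ∃ y', y' ∉ W ∧ G.Adj x' y' := by
  intro x y p
  induction p with
  | nil => intro h1 h2; exact absurd h1 h2
  | @cons a c w hadj q ih =>
    intro h1 h2
    by_cases hm : c ∈ W
    · exact ih hm h2
    · exact ⟨a, h1, c, hm, hadj⟩

lemma exists_order [DecidableEq V] [Fintype V] (hconn : G.Connected)
    (S : Finset V) (hS : S.Nonempty) :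
    ∃ l : List V, l.Nodup ∧ (∀ x ∈ l, x ∉ S) ∧ (∀ v : V, v ∈ S ∨ v ∈ l) ∧
      ∀ i (h : i < l.length), ∃ u, (u ∈ S ∨ u ∈ l.take i) ∧ G.Adj u l[i] := by
  have claim : ∀ k (W : Finset V), W.Nonempty → (Finset.univ \ W).card = k →
      ∃ l : List V, l.Nodup ∧ (∀ x ∈ l, x ∉ W) ∧ (∀ v : V, v ∈ W ∨ v ∈ l) ∧
        ∀ i (h : i < l.length), ∃ u, (u ∈ W ∨ u ∈ l.take i) ∧ G.Adj u l[i] := by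
    intro k
    induction k with
    | zero =>
      intro W _ hcard
      refine ⟨[], by simp, by simp, ?_, by simp⟩
      intro v
      left
      by_contra hv
      have : v ∈ Finset.univ \ W := by simp [hv]
      rw [Finset.card_eq_zero] at hcard
      simp [hcard] at this
    | succ k ih =>
      intro W hWne hcard
      have hex : ∃ v, v ∉ W := by
        by_contra h
        push_neg at h
        have : Finset.univ \ W = ∅ := by
          ext v; simp [h v]
        simp [this] at hcard
      obtain ⟨v0, hv0⟩ := hex
      obtain ⟨u0, hu0⟩ := hWne
      obtain ⟨p⟩ := hconn.preconnected u0 v0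
      obtain ⟨x, hx, y, hy, hxy⟩ := walk_boundary u0 v0 p hu0 hv0
      have hcard' : (Finset.univ \ insert y W).card = k := by
        have : Finset.univ \ insert y W = (Finset.univ \ W).erase y := by
          ext z; simp [and_comm]
        rw [this, Finset.card_erase_of_mem (by simp [hy]), hcard]
        omega
      obtain ⟨l', hnd, hnotW, hcov, hord⟩ := ih (insert y W) ⟨y, by simp⟩ hcard'
      refine ⟨y :: l', ?_, ?_, ?_, ?_⟩
      · refine List.nodup_cons.mpr ⟨fun hmem => ?_, hnd⟩
        exact hnotW y hmem (by simp)
      · intro z hz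
        rcases List.mem_cons.mp hz with rfl | hz'
        · exact hy
        · intro hzW; exact hnotW z hz' (by simp [hzW])
      · intro v
        rcases hcov v with hv | hv
        · rcases Finset.mem_insert.mp hv with rfl | hv'
          · right; simp
          · left; exact hv'
        · right; exact List.mem_cons_of_mem _ hv
      · intro i hi
        cases i with
        | zero => exact ⟨x, Or.inl hx, by simpa using hxy⟩
        | succ i =>
          obtain ⟨u, hu, hadj⟩ := hord i (by simpa using hi)
          refine ⟨u, ?_, by simpa using hadj⟩
          rcases hu with hu | hu
          · rcases Finset.mem_insert.mp hu with rfl | hu'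
            · right; rw [List.take_succ_cons]; simp
            · left; exact hu'
          · right; rw [List.take_succ_cons]; exact List.mem_cons_of_mem _ hu
  obtain ⟨l, h1, h2, h3, h4⟩ := claim (Finset.univ \ S).card S hS rfl
  exact ⟨l, h1, h2, h3, h4⟩

end Stm13

namespace Stm13
variable {V : Type*} {G : SimpleGraph V}

lemma counting [Fintype V] [DecidableEq V] [DecidableRel G.Adj]
    (g : ℕ) (hg3 : 3 ≤ g)
    (huni : G.edgeFinset.card = Fintype.card V)
    (cyc : ℕ → V) (hadj : ∀ i < g, G.Adj (cyc i) (cyc (i+1))) (hg0 : cyc g = cyc 0)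
    (hinj : ∀ i < g, ∀ j < g, cyc i = cyc j → i = j)
    (l : List V) (hnd : l.Nodup) (hnS : ∀ x ∈ l, x ∉ (Finset.range g).image cyc)
    (hcov : ∀ v : V, v ∈ (Finset.range g).image cyc ∨ v ∈ l)
    (hord : ∀ i (h : i < l.length), ∃ u,
      (u ∈ (Finset.range g).image cyc ∨ u ∈ l.take i) ∧ G.Adj u l[i]) :
    (∀ x y, G.Adj x y → x ∈ (Finset.range g).image cyc → y ∈ (Finset.range g).image cyc →
      ∃ i < g, (x = cyc i ∧ y = cyc (i+1)) ∨ (y = cyc i ∧ x = cyc (i+1))) ∧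
    (∀ i (h : i < l.length), ∀ u u',
      ((u ∈ (Finset.range g).image cyc ∨ u ∈ l.take i) ∧ G.Adj u l[i]) →
      ((u' ∈ (Finset.range g).image cyc ∨ u' ∈ l.take i) ∧ G.Adj u' l[i]) → u = u') := by
  set S : Finset V := (Finset.range g).image cyc with hS
  set len := l.length with hlen
  set N := Fintype.card V with hN
  -- vertex enumeration
  set vert : ℕ → V := fun t => if t < g then cyc t else l.getD (t - g) (cyc 0) with hvert
  have vt1 : ∀ t, t < g → vert t = cyc t := by intro t ht; simp [hvert, ht]
  have vt2 : ∀ i, (h : i < len) → vert (g + i) = l[i] := by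
    intro i h
    simp only [hvert, if_neg (by omega : ¬ g + i < g)]
    rw [show g + i - g = i by omega]
    exact List.getD_eq_getElem l _ h
  have hScard : S.card = g := by
    rw [hS, Finset.card_image_of_injOn, Finset.card_range]
    intro i hi j hj hij
    exact hinj i (by simpa using hi) j (by simpa using hj) hij
  have hmemS : ∀ i, i < g → cyc i ∈ S := by
    intro i hi; rw [hS]; exact Finset.mem_image.mpr ⟨i, by simpa using hi, rfl⟩
  have hNg : N = g + len := by
    have hdisj : Disjoint S l.toFinset := by
      rw [Finset.disjoint_right]
      intro x hx
      exact hnS x (by simpa using hx)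
    have huniv : S ∪ l.toFinset = Finset.univ := by
      ext v
      simp only [Finset.mem_union, Finset.mem_univ, iff_true, List.mem_toFinset]
      exact hcov v
    have := Finset.card_union_of_disjoint hdisj
    rw [huniv, Finset.card_univ] at this
    rw [hN, this, hScard, List.toFinset_card_of_nodup hnd]
  have hgN : g ≤ N := by omega
  -- ranks
  have hrankS : ∀ v ∈ S, ∃ t, t < g ∧ vert t = v := by
    intro v hv
    rw [hS] at hv
    obtain ⟨i, hi, rfl⟩ := Finset.mem_image.mp hv
    exact ⟨i, by simpa using hi, vt1 i (by simpa using hi)⟩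
  have hrankL : ∀ v ∈ l, ∃ i, ∃ (h : i < len), vert (g + i) = v ∧ l[i] = v := by
    intro v hv
    obtain ⟨i, hi, rfl⟩ := List.mem_iff_getElem.mp hv
    exact ⟨i, hi, vt2 i hi, rfl⟩
  have hrank : ∀ v : V, ∃ t, t < N ∧ vert t = v := by
    intro v
    rcases hcov v with hv | hv
    · obtain ⟨t, ht, hvt⟩ := hrankS v hv
      exact ⟨t, by omega, hvt⟩
    · obtain ⟨i, hi, hvt, _⟩ := hrankL v hv
      exact ⟨g + i, by omega, hvt⟩
  have hvinj : ∀ t, t < N → ∀ t', t' < N → vert t = vert t' → t = t' := by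
    intro t ht t' ht' heq
    rcases Nat.lt_or_ge t g with h1 | h1 <;> rcases Nat.lt_or_ge t' g with h2 | h2
    · rw [vt1 t h1, vt1 t' h2] at heq; exact hinj t h1 t' h2 heq
    · exfalso
      rw [vt1 t h1, (by rw [show g + (t' - g) = t' by omega] : vert (g + (t'-g)) = vert t').symm,
        vt2 (t'-g) (by omega)] at heq
      exact hnS _ (List.getElem_mem _) (heq ▸ hmemS t h1)
    · exfalso
      rw [vt1 t' h2, (by rw [show g + (t - g) = t by omega] : vert (g + (t-g)) = vert t).symm,
        vt2 (t-g) (by omega)] at heq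
      exact hnS _ (List.getElem_mem _) (heq.symm ▸ hmemS t' h2)
    · have e1 := vt2 (t-g) (by omega)
      have e2 := vt2 (t'-g) (by omega)
      rw [show g + (t-g) = t by omega] at e1
      rw [show g + (t'-g) = t' by omega] at e2
      rw [e1, e2] at heq
      have := (hnd.getElem_inj_iff).mp heq
      omega
  -- prev sets
  set prev : ℕ → Finset ℕ := fun t => (Finset.range t).filter (fun j => G.Adj (vert j) (vert t))
    with hprev
  have hprev_mem : ∀ j t, j ∈ prev t ↔ j < t ∧ G.Adj (vert j) (vert t) := by
    intro j t; simp [hprev]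
  -- the sum identity
  have hsum : ∑ t ∈ Finset.range N, (prev t).card = N := by
    have hbij : ((Finset.range N).sigma prev).card = G.edgeFinset.card := by
      apply Finset.card_bij (fun p _ => s(vert p.2, vert p.1))
      · rintro ⟨t, j⟩ hp
        simp only [Finset.mem_sigma, Finset.mem_range] at hp
        obtain ⟨ht, hj⟩ := hp
        rw [hprev_mem] at hj
        show s(vert j, vert t) ∈ G.edgeFinset
        rw [SimpleGraph.mem_edgeFinset, SimpleGraph.mem_edgeSet]
        exact hj.2
      · rintro ⟨t, j⟩ hp ⟨t', j'⟩ hp' heq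
        simp only [Finset.mem_sigma, Finset.mem_range] at hp hp'
        obtain ⟨ht, hj⟩ := hp
        obtain ⟨ht', hj'⟩ := hp'
        rw [hprev_mem] at hj hj'
        rw [Sym2.eq_iff] at heq
        rcases heq with ⟨e1, e2⟩ | ⟨e1, e2⟩
        · have : j = j' := hvinj j (by omega) j' (by omega) e1
          have : t = t' := hvinj t (by omega) t' (by omega) e2
          subst this; subst ‹j = j'›; rfl
        · have hjt : j = t' := hvinj j (by omega) t' (by omega) e1
          have htj : t = j' := hvinj t (by omega) j' (by omega) e2
          omega
      · intro e he
        rw [SimpleGraph.mem_edgeFinset] at he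
        induction e with
        | h x y =>
          rw [SimpleGraph.mem_edgeSet] at he
          obtain ⟨tx, htx, hvx⟩ := hrank x
          obtain ⟨ty, hty, hvy⟩ := hrank y
          have hne : tx ≠ ty := by
            intro h; rw [h, hvy] at hvx; exact he.ne hvx.symm
          rcases Nat.lt_or_ge ty tx with h1 | h1
          · refine ⟨⟨tx, ty⟩, ?_, ?_⟩
            · simp only [Finset.mem_sigma, Finset.mem_range]
              refine ⟨htx, ?_⟩
              rw [hprev_mem, hvx, hvy]
              exact ⟨h1, he.symm⟩
            · rw [hvx, hvy]; exact Sym2.eq_swap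
          · refine ⟨⟨ty, tx⟩, ?_, ?_⟩
            · simp only [Finset.mem_sigma, Finset.mem_range]
              refine ⟨hty, ?_⟩
              rw [hprev_mem, hvx, hvy]
              exact ⟨by omega, he⟩
            · rw [hvx, hvy]
    rw [← Finset.card_sigma, hbij]
    exact huni
    -- lower bound function
  have hm1 : 0 ∈ prev (g-1) := by
    rw [hprev_mem, vt1 0 (by omega), vt1 (g-1) (by omega)]
    refine ⟨by omega, ?_⟩
    have := (hadj (g-1) (by omega)).symm
    rwa [show g - 1 + 1 = g by omega, hg0] at this
  have hm2 : g - 2 ∈ prev (g-1) := by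
    rw [hprev_mem, vt1 (g-2) (by omega), vt1 (g-1) (by omega)]
    refine ⟨by omega, ?_⟩
    have := hadj (g-2) (by omega)
    rwa [show g - 2 + 1 = g - 1 by omega] at this
  have hmt : ∀ t, 1 ≤ t → t < g → t - 1 ∈ prev t := by
    intro t h1 h2
    rw [hprev_mem, vt1 (t-1) (by omega), vt1 t h2]
    refine ⟨by omega, ?_⟩
    have := hadj (t-1) (by omega)
    rwa [show t - 1 + 1 = t by omega] at this
  have hlb : ∀ t ∈ Finset.range N, (if t = 0 then 0 else if t = g - 1 then 2 else 1)
      ≤ (prev t).card := by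
    intro t ht
    rw [Finset.mem_range] at ht
    rcases Nat.eq_zero_or_pos t with rfl | htpos
    · simp
    rcases Nat.lt_or_ge t g with h1 | h1
    · rcases Nat.eq_or_lt_of_le (by omega : t ≤ g - 1) with he | hlt
      · -- t = g - 1
        rw [if_neg (by omega), if_pos he]
        subst he
        calc 2 = ({0, g-2} : Finset ℕ).card := by
                rw [Finset.card_pair (by omega)]
          _ ≤ (prev (g-1)).card := Finset.card_le_card (by
                intro z hz
                rcases Finset.mem_insert.mp hz with rfl | hz'
                · exact hm1
                · rw [Finset.mem_singleton.mp hz']; exact hm2)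
      · -- 1 ≤ t ≤ g - 2
        rw [if_neg (by omega), if_neg (by omega)]
        exact Finset.card_pos.mpr ⟨t-1, hmt t (by omega) h1⟩
    · -- t ≥ g
      rw [if_neg (by omega), if_neg (by omega)]
      have hi : t - g < len := by omega
      obtain ⟨u, hu, huadj⟩ := hord (t - g) hi
      have hvt : vert t = l[t - g]'hi := by
        have := vt2 (t-g) hi
        rwa [show g + (t - g) = t by omega] at this
      rcases hu with huS | huT
      · obtain ⟨j, hj, hvj⟩ := hrankS u huS
        have : j ∈ prev t := by
          rw [hprev_mem, hvj, hvt]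
          exact ⟨by omega, huadj⟩
        exact Finset.card_pos.mpr ⟨j, this⟩
      · obtain ⟨j, hjlt, hju⟩ := List.mem_take_iff_getElem.mp huT
        have hjtake : j < t - g := by
          have := hjlt
          omega
        have hjlen : j < len := by
          have := hjlt
          omega
        have : g + j ∈ prev t := by
          rw [hprev_mem]
          constructor
          · omega
          · rw [vt2 j hjlen, hvt, hju]
            exact huadj
        exact Finset.card_pos.mpr ⟨g + j, this⟩
  have hlbsum : ∑ t ∈ Finset.range N, (if t = 0 then 0 else if t = g - 1 then 2 else 1) = N := by
    have hsplit : ∀ t : ℕ, (if t = 0 then 0 else if t = g-1 then 2 else 1)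
        = ((if t = g-1 then 1 else 0) + (if t = 0 then 0 else 1) : ℕ) := by
      intro t
      rcases eq_or_ne t 0 with rfl | h0
      · rw [if_pos rfl, if_neg (by omega), if_pos rfl]
      · rcases eq_or_ne t (g-1) with rfl | h1
        · rw [if_neg h0, if_pos rfl, if_pos rfl, if_neg h0]
        · rw [if_neg h0, if_neg h1, if_neg h1, if_neg h0]
    rw [Finset.sum_congr rfl (fun t _ => hsplit t), Finset.sum_add_distrib]
    have e1 : ∑ t ∈ Finset.range N, (if t = g-1 then (1:ℕ) else 0) = 1 := by
      rw [Finset.sum_ite_eq' (Finset.range N) (g-1) (fun _ => (1:ℕ))]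
      rw [if_pos (Finset.mem_range.mpr (by omega))]
    have e3 : ∑ t ∈ Finset.range N, (if t = 0 then (1:ℕ) else 0) = 1 := by
      rw [Finset.sum_ite_eq' (Finset.range N) 0 (fun _ => (1:ℕ))]
      rw [if_pos (Finset.mem_range.mpr (by omega))]
    have e2 : (∑ t ∈ Finset.range N, (if t = 0 then (0:ℕ) else 1))
        + (∑ t ∈ Finset.range N, (if t = 0 then (1:ℕ) else 0)) = N := by
      rw [← Finset.sum_add_distrib]
      have h4 : ∀ t : ℕ, ((if t = 0 then (0:ℕ) else 1) + (if t = 0 then (1:ℕ) else 0)) = 1 := by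
        intro t; by_cases h : t = 0 <;> simp [h]
      rw [Finset.sum_congr rfl (fun t _ => h4 t), Finset.sum_const, Finset.card_range,
        smul_eq_mul, mul_one]
    omega
  have heq : ∀ t ∈ Finset.range N,
      (if t = 0 then 0 else if t = g - 1 then 2 else 1) = (prev t).card :=
    (Finset.sum_eq_sum_iff_of_le hlb).mp (hlbsum.trans hsum.symm)
  -- main S-S consecutive claim for ordered ranks
  have main : ∀ x y : V, G.Adj x y → ∀ tx ty, tx < g → ty < g → vert tx = x → vert ty = y →
      ty < tx → ∃ i < g, (x = cyc i ∧ y = cyc (i+1)) ∨ (y = cyc i ∧ x = cyc (i+1)) := by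
    intro x y hxy tx ty htx hty hvx hvy hlt
    have hmem : ty ∈ prev tx := by
      rw [hprev_mem, hvx, hvy]; exact ⟨hlt, hxy.symm⟩
    have hcard := (heq tx (Finset.mem_range.mpr (by omega))).symm
    have ex : x = cyc tx := by rw [← hvx, vt1 tx htx]
    have ey : y = cyc ty := by rw [← hvy, vt1 ty hty]
    rcases eq_or_ne tx (g-1) with he | hne1
    · subst he
      rw [if_neg (by omega), if_pos rfl] at hcard
      have hsub : ({0, g-2} : Finset ℕ) ⊆ prev (g-1) := by
        intro z hz
        rcases Finset.mem_insert.mp hz with rfl | hz'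
        · exact hm1
        · rw [Finset.mem_singleton.mp hz']; exact hm2
      have hpeq : prev (g-1) = {0, g-2} :=
        (Finset.eq_of_subset_of_card_le hsub (by rw [hcard, Finset.card_pair (by omega)])).symm
      rw [hpeq] at hmem
      rcases Finset.mem_insert.mp hmem with rfl | hmem'
      · refine ⟨g-1, by omega, Or.inl ⟨ex, ?_⟩⟩
        rw [show g - 1 + 1 = g by omega, hg0]; exact ey
      · rw [Finset.mem_singleton] at hmem'
        subst hmem'
        refine ⟨g-2, by omega, Or.inr ⟨ey, ?_⟩⟩
        rw [show g - 2 + 1 = g - 1 by omega]; exact ex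
    · rw [if_neg (by omega), if_neg hne1] at hcard
      obtain ⟨z, hz⟩ := Finset.card_eq_one.mp hcard
      have h5 : tx - 1 ∈ prev tx := hmt tx (by omega) htx
      rw [hz, Finset.mem_singleton] at h5 hmem
      refine ⟨tx - 1, by omega, Or.inr ⟨?_, ?_⟩⟩
      · rw [ey, hmem, h5]
      · rw [show tx - 1 + 1 = tx by omega]; exact ex
  constructor
  · intro x y hxy hxS hyS
    obtain ⟨tx, htxg, hvx⟩ := hrankS x hxS
    obtain ⟨ty, htyg, hvy⟩ := hrankS y hyS
    rcases lt_trichotomy ty tx with h | h | h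
    · exact main x y hxy tx ty htxg htyg hvx hvy h
    · exfalso; subst h; rw [hvy] at hvx; exact hxy.ne hvx.symm
    · obtain ⟨i, hig, hi⟩ := main y x hxy.symm ty tx htyg htxg hvy hvx h
      exact ⟨i, hig, hi.symm⟩
  · intro i hi u u' h1 h2
    obtain ⟨hu, hadju⟩ := h1
    obtain ⟨hu', hadju'⟩ := h2
    have hranku : ∀ w : V, (w ∈ S ∨ w ∈ l.take i) → ∃ j, j < g + i ∧ vert j = w := by
      intro w hw
      rcases hw with hw | hw
      · obtain ⟨j, hj, hvj⟩ := hrankS w hw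
        exact ⟨j, by omega, hvj⟩
      · obtain ⟨jj, hjj, hjw⟩ := List.mem_take_iff_getElem.mp hw
        refine ⟨g + jj, by omega, ?_⟩
        rw [vt2 jj (by omega)]
        exact hjw
    obtain ⟨j, hj, hvj⟩ := hranku u hu
    obtain ⟨j', hj', hvj'⟩ := hranku u' hu'
    have hiN : g + i < N := by omega
    have hmemj : j ∈ prev (g+i) := by
      rw [hprev_mem, hvj, vt2 i hi]
      exact ⟨by omega, hadju⟩
    have hmemj' : j' ∈ prev (g+i) := by
      rw [hprev_mem, hvj', vt2 i hi]
      exact ⟨by omega, hadju'⟩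
    have hcard := (heq (g+i) (Finset.mem_range.mpr hiN)).symm
    rw [if_neg (by omega), if_neg (by omega)] at hcard
    obtain ⟨z, hz⟩ := Finset.card_eq_one.mp hcard
    rw [hz, Finset.mem_singleton] at hmemj hmemj'
    rw [← hvj, ← hvj', hmemj, hmemj']

end Stm13

namespace Stm13
variable {V : Type*} {G : SimpleGraph V}

noncomputable def pickb (b : ℕ) (S : Finset ℤ) : Finset ℤ :=
  if h : b ≤ S.card then (Finset.exists_subset_card_eq h).choose else ∅

lemma pickb_subset (b : ℕ) (S : Finset ℤ) : pickb b S ⊆ S := by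
  rw [pickb]
  split
  · exact (Finset.exists_subset_card_eq ‹_›).choose_spec.1
  · exact Finset.empty_subset S

lemma pickb_card (b : ℕ) (S : Finset ℤ) (h : b ≤ S.card) : (pickb b S).card = b := by
  rw [pickb, dif_pos h]
  exact (Finset.exists_subset_card_eq h).choose_spec.2

lemma mod1 (g p i : ℕ) (hp : p < g) (hi : i < g) :
    (p + ((g + i - p) % g)) % g = i := by
  have h2 : p + ((g+i-p) % g) ≡ p + (g+i-p) [MOD g] := Nat.ModEq.add_left p (Nat.mod_modEq _ g)
  calc (p + ((g+i-p) % g)) % g = (p + (g+i-p)) % g := h2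
    _ = (g + i) % g := by rw [show p + (g+i-p) = g + i by omega]
    _ = i % g := Nat.add_mod_left g i
    _ = i := Nat.mod_eq_of_lt hi

lemma mod2 (g x : ℕ) : (x % g + 1) % g = (x + 1) % g :=
  Nat.ModEq.add_right 1 (Nat.mod_modEq x g)

lemma ext_color [Fintype V] [DecidableEq V]
    (g b d a : ℕ) (hg3 : 3 ≤ g) (hd : 1 ≤ d) (hb : 1 ≤ b) (hkd : b ≤ (g/2) * d)
    (haeq : a = 2*b + d)
    (cyc : ℕ → V) (hg0 : cyc g = cyc 0)
    (hinj : ∀ i < g, ∀ j < g, cyc i = cyc j → i = j)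
    (l : List V) (hnd : l.Nodup) (hnS : ∀ x ∈ l, x ∉ (Finset.range g).image cyc)
    (CONS : ∀ x y, G.Adj x y → x ∈ (Finset.range g).image cyc →
      y ∈ (Finset.range g).image cyc →
      ∃ i < g, (x = cyc i ∧ y = cyc (i+1)) ∨ (y = cyc i ∧ x = cyc (i+1)))
    (par : (i : ℕ) → i < l.length → V)
    (hparP : ∀ i (h : i < l.length),
      (par i h ∈ (Finset.range g).image cyc ∨ par i h ∈ l.take i) ∧ G.Adj (par i h) l[i])
    (hparU : ∀ i (h : i < l.length), ∀ u, (u ∈ (Finset.range g).image cyc ∨ u ∈ l.take i) →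
      G.Adj u l[i] → u = par i h)
    (L : V → Finset ℤ) (hL : ∀ v, (L v).card = a) :
    ∀ len', len' ≤ l.length →
      ∀ v₀ ∈ (Finset.range g).image cyc ∪ (l.take len').toFinset,
      ∀ c₀ : Finset ℤ, c₀ ⊆ L v₀ → c₀.card = b →
      ∃ c : V → Finset ℤ, c v₀ = c₀ ∧
        (∀ v ∈ (Finset.range g).image cyc ∪ (l.take len').toFinset,
          c v ⊆ L v ∧ (c v).card = b) ∧
        (∀ x ∈ (Finset.range g).image cyc ∪ (l.take len').toFinset,
         ∀ y ∈ (Finset.range g).image cyc ∪ (l.take len').toFinset,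
          G.Adj x y → Disjoint (c x) (c y)) := by
  set S : Finset V := (Finset.range g).image cyc with hS
  have hgpos : 0 < g := by omega
  intro len'
  induction len' with
  | zero =>
    intro _ v₀ hv₀ c₀ hc₀sub hc₀card
    have hv₀S : v₀ ∈ S := by simpa using hv₀
    obtain ⟨p, hpg', hpv⟩ := Finset.mem_image.mp hv₀S
    have hpg : p < g := by simpa using hpg'
    -- apply the cycle lemma with rotated lists
    obtain ⟨cc, hcc0, hccP, hccD, hccE⟩ := cycle_color g b d hg3 hd hb hkd a haeq
      (fun i => L (cyc ((p + i) % g))) (fun i => hL _) c₀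
      (by simp only [Nat.add_zero, Nat.mod_eq_of_lt hpg, hpv]; exact hc₀sub) hc₀card
    have hidx : ∀ v ∈ S, ∃ t, t < g ∧ cyc t = v := by
      intro v hv
      obtain ⟨t, ht, e⟩ := Finset.mem_image.mp hv
      exact ⟨t, by simpa using ht, e⟩
    refine ⟨fun v => if h : v ∈ S then cc ((g + (hidx v h).choose - p) % g) else ∅, ?_, ?_, ?_⟩
    · -- value at v₀
      dsimp only
      rw [dif_pos hv₀S]
      obtain ⟨ht, he⟩ := (hidx v₀ hv₀S).choose_spec
      have : (hidx v₀ hv₀S).choose = p := hinj _ ht _ hpg (he.trans hpv.symm)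
      rw [this, show g + p - p = g by omega, Nat.mod_self]
      exact hcc0
    · -- subsets and cards
      intro v hv
      have hvS : v ∈ S := by simpa using hv
      dsimp only
      rw [dif_pos hvS]
      obtain ⟨ht, he⟩ := (hidx v hvS).choose_spec
      set t := (hidx v hvS).choose
      have hu : (g + t - p) % g < g := Nat.mod_lt _ hgpos
      have := hccP ((g + t - p) % g) (by omega)
      rw [mod1 g p t hpg ht, he] at this
      exact this
    · -- edges
      intro x hx y hy hxy
      have hxS : x ∈ S := by simpa using hx
      have hyS : y ∈ S := by simpa using hy
      have key : ∀ x' y', (hx' : x' ∈ S) → (hy' : y' ∈ S) →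
          (∃ i < g, x' = cyc i ∧ y' = cyc (i+1)) →
          Disjoint (cc ((g + (hidx x' hx').choose - p) % g))
            (cc ((g + (hidx y' hy').choose - p) % g)) := by
        intro x' y' hx' hy' ⟨i, hig, hxi, hyi⟩
        obtain ⟨htx, hex⟩ := (hidx x' hx').choose_spec
        obtain ⟨hty, hey⟩ := (hidx y' hy').choose_spec
        have htxi : (hidx x' hx').choose = i := hinj _ htx _ hig (hex.trans hxi)
        set u := (g + i - p) % g with hu
        have hult : u < g := Nat.mod_lt _ hgpos
        have hty' : (hidx y' hy').choose = (i + 1) % g := by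
          rcases Nat.lt_or_ge (i+1) g with h1 | h1
          · rw [Nat.mod_eq_of_lt h1]
            exact hinj _ hty _ h1 (hey.trans hyi)
          · have hig' : i + 1 = g := by omega
            rw [hig', Nat.mod_self]
            refine hinj _ hty 0 (by omega) (hey.trans ?_)
            rw [hyi, hig', hg0]
        have hkey2 : (g + ((i+1) % g) - p) % g = (u + 1) % g := by
          rcases Nat.lt_or_ge (i+1) g with h1 | h1
          · rw [Nat.mod_eq_of_lt h1]
            rw [hu, mod2, show g + i - p + 1 = g + (i+1) - p by omega]
          · have hig' : i + 1 = g := by omega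
            rw [hig', Nat.mod_self, Nat.add_zero]
            rw [hu, mod2, show g + i - p + 1 = g + (g - p) by omega, Nat.add_mod_left]
        rw [htxi, hty', hkey2, ← hu]
        rcases Nat.lt_or_ge (u+1) g with h2 | h2
        · rw [Nat.mod_eq_of_lt h2]
          exact hccD u (by omega)
        · have hu1 : u = g - 1 := by omega
          rw [hu1, show g - 1 + 1 = g by omega, Nat.mod_self, hcc0]
          exact hccE
      obtain ⟨i, hig, hcase⟩ := CONS x y hxy hxS hyS
      dsimp only
      rw [dif_pos hxS, dif_pos hyS]
      rcases hcase with h | h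
      · exact key x y hxS hyS ⟨i, hig, h⟩
      · exact (key y x hyS hxS ⟨i, hig, h⟩).symm
  | succ len' ih =>
    intro hlen1 v₀ hv₀ c₀ hc₀sub hc₀card
    have hlen' : len' < l.length := by omega
    set x := l[len']'hlen' with hxdef
    have hW' : ∀ v, v ∈ S ∪ (l.take (len'+1)).toFinset ↔
        (v ∈ S ∪ (l.take len').toFinset ∨ v = x) := by
      intro v
      simp only [Finset.mem_union, List.mem_toFinset]
      constructor
      · rintro (h | h)
        · exact Or.inl (Or.inl h)
        · rcases List.mem_take_iff_getElem.mp h with ⟨j, hj, rfl⟩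
          rcases Nat.lt_or_ge j len' with hj' | hj'
          · exact Or.inl (Or.inr (List.mem_take_iff_getElem.mpr ⟨j, by omega, rfl⟩))
          · have : j = len' := by omega
            subst this; exact Or.inr rfl
      · rintro ((h | h) | h)
        · exact Or.inl h
        · rcases List.mem_take_iff_getElem.mp h with ⟨j, hj, rfl⟩
          exact Or.inr (List.mem_take_iff_getElem.mpr ⟨j, by omega, rfl⟩)
        · subst h; exact Or.inr (List.mem_take_iff_getElem.mpr ⟨len', by omega, rfl⟩)
    have hxS : x ∉ S := hnS x (List.getElem_mem _)
    have hxW : x ∉ S ∪ (l.take len').toFinset := by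
      simp only [Finset.mem_union, List.mem_toFinset]
      rintro (h | h)
      · exact hxS h
      · rcases List.mem_take_iff_getElem.mp h with ⟨j, hj, hje⟩
        have := (hnd.getElem_inj_iff).mp hje
        omega
    set q := par len' hlen' with hqdef
    have hqP := hparP len' hlen'
    have hqmem : q ∈ S ∪ (l.take len').toFinset := by
      simp only [Finset.mem_union, List.mem_toFinset]
      exact hqP.1
    have hqadj : G.Adj q x := hqP.2
    have hba : b ≤ a - b := by omega
    -- unique-parent characterisation
    have huniq : ∀ y, y ∈ S ∪ (l.take len').toFinset → G.Adj y x → y = q := by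
      intro y hy hadjy
      apply hparU len' hlen' y _ hadjy
      simpa only [Finset.mem_union, List.mem_toFinset] using hy
    have hne : ∀ z, z ∈ S ∪ (l.take len').toFinset → z ≠ x :=
      fun z hz h => hxW (by rwa [h] at hz)
    by_cases hv : v₀ = x
    · -- recolor from the parent
      subst hv
      have hbq : b ≤ (L q \ c₀).card := by
        have := Finset.le_card_sdiff c₀ (L q)
        rw [hL, hc₀card] at this
        omega
      obtain ⟨c, hcv0, hcP, hcD⟩ := ih (by omega) q hqmem (pickb b (L q \ c₀))
        ((pickb_subset _ _).trans sdiff_subset) (pickb_card _ _ hbq)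
      have hdisj0 : Disjoint c₀ (c q) := by
        rw [hcv0, Finset.disjoint_right]
        intro z hz
        have := pickb_subset b (L q \ c₀) hz
        exact (Finset.mem_sdiff.mp this).2
      refine ⟨Function.update c x c₀, Function.update_self _ _ _, ?_, ?_⟩
      · intro v hv
        rcases (hW' v).mp hv with h | h
        · rw [Function.update_of_ne (by rintro rfl; exact hxW h)]
          exact hcP v h
        · subst h
          rw [Function.update_self]
          exact ⟨hc₀sub, hc₀card⟩
      · intro x' hx' y' hy' hadj'
        rcases (hW' x').mp hx' with h1 | h1 <;> rcases (hW' y').mp hy' with h2 | h2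
        · rw [Function.update_of_ne (hne x' h1), Function.update_of_ne (hne y' h2)]
          exact hcD x' h1 y' h2 hadj'
        · rw [Function.update_of_ne (hne x' h1), h2, Function.update_self]
          have hxq : x' = q := huniq x' h1 (by rwa [h2] at hadj')
          rw [hxq]
          exact hdisj0.symm
        · rw [Function.update_of_ne (hne y' h2), h1, Function.update_self]
          have hyq : y' = q := huniq y' h2 (by rw [← h1]; exact hadj'.symm)
          rw [hyq]
          exact hdisj0
        · rw [h1, h2] at hadj'
          exact absurd rfl hadj'.ne
    · -- v₀ is an old vertex
      have hv₀' : v₀ ∈ S ∪ (l.take len').toFinset := by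
        rcases (hW' v₀).mp hv₀ with h | h
        · exact h
        · exact absurd h hv
      obtain ⟨c, hcv0, hcP, hcD⟩ := ih (by omega) v₀ hv₀' c₀ hc₀sub hc₀card
      have hcqcard : (c q).card = b := (hcP q hqmem).2
      have hbx : b ≤ (L x \ c q).card := by
        have := Finset.le_card_sdiff (c q) (L x)
        rw [hL, hcqcard] at this
        omega
      have hdisjq : Disjoint (pickb b (L x \ c q)) (c q) := by
        rw [Finset.disjoint_left]
        intro z hz
        have := pickb_subset b (L x \ c q) hz
        exact (Finset.mem_sdiff.mp this).2
      refine ⟨Function.update c x (pickb b (L x \ c q)), ?_, ?_, ?_⟩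
      · rw [Function.update_of_ne hv]; exact hcv0
      · intro v hv'
        rcases (hW' v).mp hv' with h | h
        · rw [Function.update_of_ne (by rintro rfl; exact hxW h)]
          exact hcP v h
        · subst h
          rw [Function.update_self]
          exact ⟨(pickb_subset _ _).trans sdiff_subset, pickb_card _ _ hbx⟩
      · intro x' hx' y' hy' hadj'
        rcases (hW' x').mp hx' with h1 | h1 <;> rcases (hW' y').mp hy' with h2 | h2
        · rw [Function.update_of_ne (hne x' h1), Function.update_of_ne (hne y' h2)]
          exact hcD x' h1 y' h2 hadj'
        · rw [Function.update_of_ne (hne x' h1), h2, Function.update_self]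
          have hxq : x' = q := huniq x' h1 (by rwa [h2] at hadj')
          rw [hxq]
          exact hdisjq.symm
        · rw [Function.update_of_ne (hne y' h2), h1, Function.update_self]
          have hyq : y' = q := huniq y' h2 (by rw [← h1]; exact hadj'.symm)
          rw [hyq]
          exact hdisjq
        · rw [h1, h2] at hadj'
          exact absurd rfl hadj'.ne

end Stm13

/-- a connected unicyclic graph (as many edges as vertices, i.e.
exactly one cycle) whose cycle has length `g` (= its girth) is free
(a,b)-choosable whenever `a/b ≥ 2 + 1/⌊g/2⌋`. -/
theorem stmt13 {V : Type*} [Fintype V] (G : SimpleGraph V) [DecidableRel G.Adj]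
    (hconn : G.Connected) (huni : G.edgeFinset.card = Fintype.card V)
    (g : ℕ) (hg3 : 3 ≤ g) (hg : G.girth = g)
    (a b : ℕ) (ha : 0 < a) (hb : 0 < b)
    (hab : (a : ℚ) / b ≥ 2 + 1 / ((g / 2 : ℕ) : ℚ)) :
    FreeChoosable G a b := by
  classical
  intro L hL v₀ c₀ hc₀sub hc₀card
  have hk1 : 1 ≤ g / 2 := by omega
  obtain ⟨d, hd1, haeq, hkd⟩ : ∃ d, 1 ≤ d ∧ a = 2*b + d ∧ b ≤ (g/2) * d := by
    have hbQ : (0:ℚ) < (b:ℚ) := by exact_mod_cast hb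
    have hkQ : (0:ℚ) < ((g/2 : ℕ):ℚ) := by exact_mod_cast hk1
    rw [ge_iff_le, le_div_iff₀ hbQ] at hab
    have h2 : ((g/2:ℕ):ℚ) * ((2 + 1/((g/2:ℕ):ℚ)) * b) ≤ ((g/2:ℕ):ℚ) * a :=
      mul_le_mul_of_nonneg_left hab (le_of_lt hkQ)
    have h3 : ((g/2:ℕ):ℚ) * ((2 + 1/((g/2:ℕ):ℚ)) * b) = 2*((g/2:ℕ):ℚ)*b + b := by
      field_simp
    rw [h3] at h2
    have h4 : 2*(g/2)*b + b ≤ (g/2) * a := by exact_mod_cast h2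
    have h5 : 2*b < a := by nlinarith
    have e0 : (g/2) * a = (g/2) * (2*b) + (g/2)*(a - 2*b) := by
      rw [← Nat.mul_add]
      congr 1
      omega
    have e1 : (g/2)*(2*b) = 2*(g/2)*b := by ring
    refine ⟨a - 2*b, ?_, by omega, by omega⟩
    have hkd' : b ≤ (g/2) * (a - 2*b) := by omega
    rcases Nat.eq_zero_or_pos (a - 2*b) with h0 | h0
    · rw [h0, Nat.mul_zero] at hkd'; omega
    · exact h0
  have hac : ¬ G.IsAcyclic := by
    intro hcyc
    have := SimpleGraph.girth_eq_zero.mpr hcyc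
    omega
  obtain ⟨x₀, w, hwc, hwlen⟩ := SimpleGraph.exists_girth_eq_length.mpr hac
  have hlen : w.length = g := by omega
  set cyc : ℕ → V := w.getVert with hcyc
  have hadjc : ∀ i < g, G.Adj (cyc i) (cyc (i+1)) := by
    intro i hi
    exact w.adj_getVert_succ (by omega)
  have hg0 : cyc g = cyc 0 := by
    show w.getVert g = w.getVert 0
    rw [w.getVert_zero, ← hlen, w.getVert_length]
  have hinjc : ∀ i < g, ∀ j < g, cyc i = cyc j → i = j := by
    intro i hi j hj e
    exact Stm13.cycle_getVert_injOn hwc i (by omega) j (by omega) e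
  have hSne : ((Finset.range g).image cyc).Nonempty :=
    ⟨cyc 0, Finset.mem_image.mpr ⟨0, Finset.mem_range.mpr (by omega), rfl⟩⟩
  obtain ⟨l, hnd, hnS, hcov, hord⟩ := Stm13.exists_order hconn _ hSne
  obtain ⟨CONS, UNIQ⟩ := Stm13.counting g hg3 huni cyc hadjc hg0 hinjc l hnd hnS hcov hord
  choose par hpar using hord
  have hparU : ∀ i (h : i < l.length), ∀ u, (u ∈ (Finset.range g).image cyc ∨ u ∈ l.take i) →
      G.Adj u l[i] → u = par i h :=
    fun i h u hu hadju => UNIQ i h u (par i h) ⟨hu, hadju⟩ (hpar i h)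
  have hmemW : ∀ v, v ∈ (Finset.range g).image cyc ∪ (l.take l.length).toFinset := by
    intro v
    rw [List.take_length]
    simp only [Finset.mem_union, List.mem_toFinset]
    exact hcov v
  obtain ⟨c, hc0, hcP, hcD⟩ := Stm13.ext_color g b d a hg3 hd1 hb hkd haeq cyc hg0 hinjc
    l hnd hnS CONS par hpar hparU L hL l.length le_rfl v₀ (hmemW v₀) c₀ hc₀sub hc₀card
  exact ⟨c, ⟨fun v => (hcP v (hmemW v)).1, fun v => (hcP v (hmemW v)).2,
    fun v w' hvw => hcD v (hmemW v) w' (hmemW w') hvw⟩, hc0⟩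
end

section
/- Let m, n ≥ 3 and p ≥ 0 be integers and let BG(m,n,p) be the binocular graph: an m-cycle and an n-cycle whose distinguished vertices u₀ and v₀ are joined by a path of length p (u₀ = v₀ when p = 0). For all positive integers a, b with a/b ≥ 2 + 1/⌊min(m,n)/2⌋, the graph BG(m,n,p) is free (a,b)-choosable. -/
/-- Label (in `ℕ`) of the `j`-th vertex (`0 ≤ j ≤ p`) of the path joining the two
cycles of the binocular graph: it starts at `u₀` (label `0`, on the `m`-cycle) and
ends at `v₀` (label `m+p-1` if `p ≥ 1`, and `u₀ = v₀` if `p = 0`). -/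
def pathV (m p j : ℕ) : ℕ :=
  if j = 0 then 0 else if j = p then (if p = 0 then 0 else m + p - 1) else m + j - 1

/-- Label of the `j`-th vertex (`0 ≤ j < n`) of the second cycle, starting at `v₀`. -/
def cyc2V (m p j : ℕ) : ℕ :=
  if j = 0 then (if p = 0 then 0 else m + p - 1) else m + p - 1 + j

/-- Adjacency of the binocular graph BG(m,n,p): the `m`-cycle on labels
`0,…,m-1`, the path `u₀,x₁,…,x_{p-1},v₀`, and the `n`-cycle through `v₀`. -/
def bgRel (m n p : ℕ) : ℕ → ℕ → Prop := fun x y =>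
  (∃ i < m, x = i ∧ y = (i + 1) % m) ∨
  (∃ j < p, x = pathV m p j ∧ y = pathV m p (j + 1)) ∨
  (∃ j < n, x = cyc2V m p j ∧ y = cyc2V m p ((j + 1) % n))

/-- The binocular graph BG(m,n,p) on its `m + n + p - 1` vertices. -/
def binocularGraph (m n p : ℕ) : SimpleGraph (Fin (m + n + p - 1)) :=
  SimpleGraph.comap Fin.val (SimpleGraph.fromRel (bgRel m n p))

theorem Finset.exists_subset_disjoint_card_eq {α : Type*} [DecidableEq α] {s t : Finset α} {b : ℕ}
    (h : t.card + b ≤ s.card) : ∃ u ⊆ s, Disjoint u t ∧ u.card = b := by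
  obtain ⟨u, hu, hcard⟩ := Finset.exists_subset_card_eq
    (show b ≤ (s \ t).card by have := Finset.le_card_sdiff t s; omega)
  exact ⟨u, hu.trans Finset.sdiff_subset, Finset.disjoint_of_subset_left hu Finset.sdiff_disjoint,
    hcard⟩

theorem two_mul_le_of_le_sub_two_mul_mul {a b k : ℕ} (h : b ≤ (a - 2 * b) * k) : 2 * b ≤ a := by
  by_contra hlt
  rw [Nat.sub_eq_zero_of_le (by omega), zero_mul] at h
  omega

theorem SimpleGraph.support_sup {V : Type*} (G H : SimpleGraph V) :
    (G ⊔ H).support = G.support ∪ H.support := by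
  ext v
  simp only [mem_support, sup_adj, Set.mem_union]
  exact exists_or

theorem SimpleGraph.support_edge_subset {V : Type*} (s t : V) : (edge s t).support ⊆ {s, t} := by
  rintro v ⟨w, hvw⟩
  obtain ⟨⟨rfl, -⟩ | ⟨rfl, -⟩, -⟩ := (edge_adj s t v w).mp hvw <;> simp

theorem SimpleGraph.support_map_subset {V W : Type*} (f : V → W) (G : SimpleGraph V) :
    (G.map f).support ⊆ Set.range f := by
  rintro v ⟨w, -, u, -, -, rfl, -⟩
  exact ⟨u, rfl⟩

theorem ZMod.val_add_one_eq_mod {ℓ : ℕ} [NeZero ℓ] (x : ZMod ℓ) :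
    (x + 1).val = (x.val + 1) % ℓ := by
  rw [ZMod.val_add, ZMod.val_one_eq_one_mod, Nat.add_mod_mod]

section FreeChoosable

variable {V W : Type*} {G H : SimpleGraph V} {L : V → Finset ℤ} {a b : ℕ}

theorem IsLbColoring.mono_left {c : V → Finset ℤ} (hGH : G ≤ H) (h : IsLbColoring H L b c) :
    IsLbColoring G L b c :=
  ⟨h.1, h.2.1, fun _ _ hadj => h.2.2 (hGH hadj)⟩

theorem FreeChoosable.mono_left (hGH : G ≤ H) (h : FreeChoosable H a b) :
    FreeChoosable G a b := fun L hL v₀ c₀ hc₀ hcard =>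
  (h L hL v₀ c₀ hc₀ hcard).imp fun _ hc => ⟨hc.1.mono_left hGH, hc.2⟩

theorem FreeChoosable.choosable (h : FreeChoosable G a b) (hba : b ≤ a) : Choosable G a b := by
  intro L hL
  rcases isEmpty_or_nonempty V with hV | ⟨⟨v⟩⟩
  · exact ⟨fun _ => ∅, isEmptyElim, isEmptyElim, fun v => isEmptyElim v⟩
  · obtain ⟨c₀, hc₀, hcard⟩ := Finset.exists_subset_card_eq ((hL v).symm ▸ hba)
    exact (h L hL v c₀ hc₀ hcard).imp fun _ hc => hc.1

theorem FreeChoosable.comap {f : V → W} {G : SimpleGraph W} (hf : Function.Injective f)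
    (h : FreeChoosable G a b) : FreeChoosable (G.comap f) a b := by
  intro L hL v₀ c₀ hc₀ hcard
  set L' : W → Finset ℤ := Function.extend f L fun _ => Finset.Ico 0 a
  have hL'f : ∀ v, L' (f v) = L v := hf.extend_apply L _
  have hL' : ∀ w, (L' w).card = a := by
    intro w
    by_cases hw : ∃ v, f v = w
    · obtain ⟨v, rfl⟩ := hw
      rw [hL'f, hL]
    · simp [L', Function.extend_apply' _ _ _ hw]
  obtain ⟨c, ⟨hcL, hcard', hdisj⟩, hc₀'⟩ := h L' hL' (f v₀) c₀ (hL'f v₀ ▸ hc₀) hcard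
  exact ⟨c ∘ f, ⟨fun v => hL'f v ▸ hcL (f v), fun v => hcard' (f v),
    fun _ _ hadj => hdisj hadj⟩, hc₀'⟩

theorem FreeChoosable.map {f : V → W} (hf : Function.Injective f) (hba : b ≤ a)
    (h : FreeChoosable G a b) : FreeChoosable (G.map f) a b := by
  classical
  intro L hL v₀ c₀ hc₀ hcard
  obtain ⟨c, hc, hcv₀⟩ : ∃ c, IsLbColoring G (L ∘ f) b c ∧ ∀ v, f v = v₀ → c v = c₀ := by
    by_cases hv₀ : ∃ v, f v = v₀
    · obtain ⟨v, rfl⟩ := hv₀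
      exact (h _ (fun _ => hL _) v c₀ hc₀ hcard).imp
        fun _ hc => ⟨hc.1, fun _ hv => hf hv ▸ hc.2⟩
    · exact ((h.choosable hba) _ fun _ => hL _).imp fun _ hc => ⟨hc, fun v hv => (hv₀ ⟨v, hv⟩).elim⟩
  choose d hdL hdcard using fun w => Finset.exists_subset_card_eq ((hL w).symm ▸ hba)
  refine ⟨Function.extend f c (Function.update d v₀ c₀), ⟨fun w => ?_, fun w => ?_, ?_⟩, ?_⟩
  · by_cases hw : ∃ v, f v = w
    · obtain ⟨v, rfl⟩ := hw
      rw [hf.extend_apply]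
      exact hc.1 v
    · rw [Function.extend_apply' _ _ _ hw]
      by_cases hwv : w = v₀ <;> simp [Function.update, hwv, hc₀, hdL]
  · by_cases hw : ∃ v, f v = w
    · obtain ⟨v, rfl⟩ := hw
      rw [hf.extend_apply]
      exact hc.2.1 v
    · rw [Function.extend_apply' _ _ _ hw]
      by_cases hwv : w = v₀ <;> simp [Function.update, hwv, hcard, hdcard]
  · rintro _ _ ⟨-, u, v, huv, rfl, rfl⟩
    rw [hf.extend_apply, hf.extend_apply]
    exact hc.2.2 huv
  · by_cases hw : ∃ v, f v = v₀
    · obtain ⟨v, rfl⟩ := hw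
      rw [hf.extend_apply, hcv₀ v rfl]
    · rw [Function.extend_apply' _ _ _ hw, Function.update_self]

theorem FreeChoosable.of_iso_transitive (w : V) (hG : ∀ v, ∃ φ : G ≃g G, φ w = v)
    (h : ∀ L : V → Finset ℤ, (∀ v, (L v).card = a) → ∀ c₀ ⊆ L w, c₀.card = b →
      ∃ c, IsLbColoring G L b c ∧ c w = c₀) :
    FreeChoosable G a b := by
  intro L hL v₀ c₀ hc₀ hcard
  obtain ⟨φ, rfl⟩ := hG v₀
  obtain ⟨c, ⟨hcL, hccard, hcdisj⟩, hcw⟩ := h (L ∘ φ) (fun _ => hL _) c₀ hc₀ hcard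
  refine ⟨c ∘ φ.symm, ⟨fun v => ?_, fun v => hccard _, fun u v huv => hcdisj ?_⟩, by simp [hcw]⟩
  · simpa using hcL (φ.symm v)
  · exact φ.symm.map_adj_iff.mpr huv

open Classical in
theorem IsLbColoring.sup_piecewise {G₁ G₂ : SimpleGraph V} {c₁ c₂ : V → Finset ℤ} {w : V}
    (h₁ : IsLbColoring G₁ L b c₁) (h₂ : IsLbColoring G₂ L b c₂)
    (hw : G₁.support ∩ G₂.support ⊆ {w}) (hc : c₁ w = c₂ w) :
    IsLbColoring (G₁ ⊔ G₂) L b (G₁.support.piecewise c₁ c₂) := by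
  have hright : ∀ v ∈ G₂.support, G₁.support.piecewise c₁ c₂ v = c₂ v := by
    intro v hv
    by_cases hv₁ : v ∈ G₁.support
    · rw [Set.piecewise_eq_of_mem _ _ _ hv₁, hw ⟨hv₁, hv⟩, hc]
    · exact Set.piecewise_eq_of_notMem _ _ _ hv₁
  refine ⟨fun v => ?_, fun v => ?_, ?_⟩
  · by_cases hv : v ∈ G₁.support
    · simpa [hv] using h₁.1 v
    · simpa [hv] using h₂.1 v
  · by_cases hv : v ∈ G₁.support
    · simpa [hv] using h₁.2.1 v
    · simpa [hv] using h₂.2.1 v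
  · rintro u v (huv | huv)
    · rw [Set.piecewise_eq_of_mem _ _ _ huv.left_mem_support,
        Set.piecewise_eq_of_mem _ _ _ huv.right_mem_support]
      exact h₁.2.2 huv
    · rw [hright u huv.left_mem_support, hright v huv.right_mem_support]
      exact h₂.2.2 huv

theorem FreeChoosable.sup {G₁ G₂ : SimpleGraph V} {w : V} (h₁ : FreeChoosable G₁ a b)
    (h₂ : FreeChoosable G₂ a b) (hw : G₁.support ∩ G₂.support ⊆ {w}) :
    FreeChoosable (G₁ ⊔ G₂) a b := by
  classical
  intro L hL v₀ c₀ hc₀ hcard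
  by_cases hv₀ : v₀ ∈ G₁.support
  · obtain ⟨c₁, hc₁, hc₁v₀⟩ := h₁ L hL v₀ c₀ hc₀ hcard
    obtain ⟨c₂, hc₂, hc₂w⟩ := h₂ L hL w (c₁ w) (hc₁.1 w) (hc₁.2.1 w)
    exact ⟨_, hc₁.sup_piecewise hc₂ hw hc₂w.symm, by rw [Set.piecewise_eq_of_mem _ _ _ hv₀, hc₁v₀]⟩
  · obtain ⟨c₂, hc₂, hc₂v₀⟩ := h₂ L hL v₀ c₀ hc₀ hcard
    obtain ⟨c₁, hc₁, hc₁w⟩ := h₁ L hL w (c₂ w) (hc₂.1 w) (hc₂.2.1 w)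
    exact ⟨_, hc₁.sup_piecewise hc₂ hw hc₁w,
      by rw [Set.piecewise_eq_of_notMem _ _ _ hv₀, hc₂v₀]⟩

theorem freeChoosable_edge (u v : V) (hab : 2 * b ≤ a) :
    FreeChoosable (SimpleGraph.edge u v) a b := by
  classical
  intro L hL v₀ c₀ hc₀ hcard
  choose T hTL hTc₀ hTcard using fun x =>
    Finset.exists_subset_disjoint_card_eq (s := L x) (t := c₀) (b := b) (by rw [hL, hcard]; omega)
  set cu := if u = v₀ then c₀ else T u
  obtain ⟨Tv, hTvL, hTvu, hTvcard⟩ := Finset.exists_subset_disjoint_card_eq (s := L v) (t := cu)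
    (b := b) (by
      rw [hL, show cu.card = b by by_cases hu : u = v₀ <;> simp [cu, hu, hcard, hTcard]]; omega)
  refine ⟨fun x => if x = v₀ then c₀ else if x = v then Tv else T x, ⟨fun x => ?_, fun x => ?_, ?_⟩,
    if_pos rfl⟩
  · dsimp only
    split_ifs with h1 h2
    · exact h1 ▸ hc₀
    · exact h2 ▸ hTvL
    · exact hTL x
  · dsimp only
    split_ifs <;> simp only [hcard, hTvcard, hTcard]
  · have key : Disjoint (if u = v₀ then c₀ else if u = v then Tv else T u)
        (if v = v₀ then c₀ else if v = v then Tv else T v) ∨ u = v := by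
      by_cases huv : u = v
      · exact Or.inr huv
      refine Or.inl ?_
      simp only [huv, if_true, if_false]
      by_cases hu : u = v₀
      · subst hu
        simpa [Ne.symm huv, cu] using hTvu.symm
      · by_cases hv : v = v₀
        · simpa [hu, hv] using hTc₀ u
        · simpa [hu, hv, cu] using hTvu.symm
    intro x y hxy
    obtain ⟨⟨rfl, rfl⟩ | ⟨rfl, rfl⟩, hne⟩ := (SimpleGraph.edge_adj u v x y).mp hxy
    · exact key.resolve_right hne
    · exact (key.resolve_right hne.symm).symm

end FreeChoosable

section Path

open SimpleGraph

variable {V : Type*} {a b : ℕ}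

def pathThrough (f : ℕ → V) : ℕ → SimpleGraph V
  | 0 => ⊥
  | k + 1 => pathThrough f k ⊔ edge (f k) (f (k + 1))

theorem pathThrough_adj {f : ℕ → V} (hf : Function.Injective f) {j : ℕ} :
    ∀ {k}, j < k → (pathThrough f k).Adj (f j) (f (j + 1))
  | k + 1, hj => by
    rcases Nat.lt_succ_iff_lt_or_eq.mp hj with hj | rfl
    · exact Or.inl (pathThrough_adj hf hj)
    · exact Or.inr ((edge_adj _ _ _ _).mpr ⟨Or.inl ⟨rfl, rfl⟩, hf.ne (by omega)⟩)

theorem support_pathThrough_subset (f : ℕ → V) :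
    ∀ k, (pathThrough f k).support ⊆ f '' Set.Iic k
  | 0 => by simp [pathThrough]
  | k + 1 => by
    rw [pathThrough, support_sup]
    refine Set.union_subset ((support_pathThrough_subset f k).trans ?_)
      ((support_edge_subset _ _).trans ?_)
    · exact Set.image_mono (Set.Iic_subset_Iic.mpr k.le_succ)
    · rintro _ (rfl | rfl)
      exacts [⟨k, by simp, rfl⟩, ⟨k + 1, by simp, rfl⟩]

theorem FreeChoosable.sup_pathThrough {G : SimpleGraph V} {f : ℕ → V}
    (h : FreeChoosable G a b) (hab : 2 * b ≤ a) (hf : Function.Injective f)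
    (hG : ∀ j, f j ∈ G.support → j = 0) : ∀ k, FreeChoosable (G ⊔ pathThrough f k) a b
  | 0 => by simpa [pathThrough] using h
  | k + 1 => by
    rw [pathThrough, ← sup_assoc]
    refine (h.sup_pathThrough hab hf hG k).sup (freeChoosable_edge _ _ hab) (w := f k) ?_
    rintro v ⟨hv, hv'⟩
    rcases support_edge_subset _ _ hv' with rfl | rfl
    · rfl
    rw [support_sup] at hv
    rcases hv with hv | hv
    · exact absurd (hG _ hv) k.succ_ne_zero
    · obtain ⟨j, hj, hjk⟩ := support_pathThrough_subset f k hv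
      have := hf hjk
      simp only [Set.mem_Iic] at hj
      omega

end Path

section DangerSets

variable (b : ℕ) (M : ℕ → Finset ℤ) (F : Finset ℤ)

/- Colour a path `w_d, …, w_1, w_0` with lists `M d, …, M 0`, where `w_0` must leave `b` colours
of `F` free. A `b`-set at `w_s` extends to the rest of the path as soon as it meets
`dangerSet s` in at most `dangerBudget s` colours: `w_{s-1}` then takes as many colours as it can
from `dangerSet s = M (s-1) \ dangerSet (s-1)`, i.e. outside the set it should avoid. -/
def dangerSet : ℕ → Finset ℤ
  | 0 => F
  | s + 1 => M s \ dangerSet s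

def dangerBudget : ℕ → ℤ
  | 0 => F.card - b
  | s + 1 => dangerBudget s + (dangerSet M F (s + 1)).card - b

variable {b M F}

theorem le_dangerBudget {e : ℕ} (hM : ∀ i, 2 * b + e ≤ (M i).card) (hF : b + e ≤ F.card)
    (s : ℕ) : ((e * (s / 2 + 1) : ℕ) : ℤ) ≤ dangerBudget b M F s := by
  induction s using Nat.twoStepInduction with
  | zero => simp only [dangerBudget]; omega
  | one =>
    have := Finset.card_le_card_sdiff_add_card (s := M 0) (t := F)
    have := hM 0
    simp only [dangerBudget, dangerSet]
    omega
  | more s ih _ =>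
    have := Finset.card_le_card_sdiff_add_card (s := M (s + 1)) (t := dangerSet M F (s + 1))
    have := hM (s + 1)
    have hs : e * ((s + 2) / 2 + 1) = e * (s / 2 + 1) + e := by
      rw [show (s + 2) / 2 = s / 2 + 1 by omega]; ring
    have hbudget : dangerBudget b M F (s + 2) = dangerBudget b M F s
        + (dangerSet M F (s + 1)).card - b + (M (s + 1) \ dangerSet M F (s + 1)).card - b := rfl
    rw [hs, Nat.cast_add, hbudget]
    omega

theorem exists_disjoint_card_inter_dangerSet_le {d : ℕ} (hM : 2 * b ≤ (M d).card)
    (hd : 0 ≤ dangerBudget b M F d) {S : Finset ℤ} (hS : S.card = b)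
    (hSd : ((S ∩ dangerSet M F (d + 1)).card : ℤ) ≤ dangerBudget b M F (d + 1)) :
    ∃ T ⊆ M d, Disjoint S T ∧ T.card = b ∧
      ((T ∩ dangerSet M F d).card : ℤ) ≤ dangerBudget b M F d := by
  set A := dangerSet M F (d + 1) \ S
  have hA : A.card + (dangerSet M F (d + 1) ∩ S).card = (dangerSet M F (d + 1)).card :=
    Finset.card_sdiff_add_card_inter _ _
  rw [Finset.inter_comm] at hA
  obtain ⟨T₁, hT₁A, hT₁card⟩ := Finset.exists_subset_card_eq (min_le_right b A.card)
  have hAM : A ⊆ M d \ S := Finset.sdiff_subset_sdiff Finset.sdiff_subset le_rfl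
  obtain ⟨T, hT₁T, hTM, hTcard⟩ := Finset.exists_subsuperset_card_eq (hT₁A.trans hAM)
    (hT₁card.trans_le (min_le_left _ _))
    (by have := Finset.le_card_sdiff S (M d); omega)
  have hTd : T ∩ dangerSet M F d ⊆ T \ T₁ := by
    intro x hx
    rw [Finset.mem_inter] at hx
    refine Finset.mem_sdiff.mpr ⟨hx.1, fun hx₁ => ?_⟩
    have := Finset.mem_sdiff.mp (Finset.mem_sdiff.mp (hT₁A hx₁)).1
    exact this.2 hx.2
  have := Finset.card_le_card hTd
  rw [Finset.card_sdiff_of_subset hT₁T] at this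
  refine ⟨T, hTM.trans Finset.sdiff_subset,
    (Finset.disjoint_of_subset_right hTM Finset.disjoint_sdiff), hTcard, ?_⟩
  simp only [dangerBudget] at hSd
  omega

theorem exists_pathColoring_of_card_inter_dangerSet_le (hM : ∀ i, 2 * b ≤ (M i).card)
    (hbudget : ∀ s, 0 ≤ dangerBudget b M F s) :
    ∀ d {S : Finset ℤ}, S.card = b →
      ((S ∩ dangerSet M F d).card : ℤ) ≤ dangerBudget b M F d →
      ∃ c : ℕ → Finset ℤ, c d = S ∧
        (∀ i < d, c i ⊆ M i ∧ (c i).card = b ∧ Disjoint (c i) (c (i + 1))) ∧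
        b ≤ (F \ c 0).card
  | 0, S, _, hSd => by
    refine ⟨fun _ => S, rfl, fun i hi => absurd hi i.not_lt_zero, show b ≤ (F \ S).card from ?_⟩
    have := Finset.card_sdiff_add_card_inter F S
    rw [Finset.inter_comm] at this
    simp only [dangerSet, dangerBudget] at hSd
    omega
  | d + 1, S, hS, hSd => by
    obtain ⟨T, hTM, hST, hTcard, hTd⟩ :=
      exists_disjoint_card_inter_dangerSet_le (hM d) (hbudget d) hS hSd
    obtain ⟨c, hcd, hc, hc0⟩ :=
      exists_pathColoring_of_card_inter_dangerSet_le hM hbudget d hTcard hTd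
    refine ⟨Function.update c (d + 1) S, by simp, fun i hi => ?_, by simpa using hc0⟩
    rw [Function.update_of_ne (by omega)]
    rcases Nat.lt_succ_iff_lt_or_eq.mp hi with hi | rfl
    · rw [Function.update_of_ne (by omega)]
      exact hc i hi
    · rw [Function.update_self, hcd]
      exact ⟨hTM, hTcard, hST.symm⟩

end DangerSets

section Cycle

def cycleGraph.rotate (ℓ : ℕ) (r : ZMod ℓ) : cycleGraph ℓ ≃g cycleGraph ℓ where
  toEquiv := Equiv.addRight r
  map_rel_iff' := by
    intro x y
    simp only [cycleGraph, SimpleGraph.fromRel_adj, Equiv.coe_addRight, ne_eq, add_left_inj]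
    rw [add_right_comm x, add_right_comm y, add_left_inj, add_left_inj]

theorem cycleGraph_map_adj_add_one {V : Type*} {ℓ : ℕ} [NeZero ℓ] (hℓ : 2 ≤ ℓ) {f : ZMod ℓ → V}
    (hf : Function.Injective f) (x : ZMod ℓ) : ((cycleGraph ℓ).map f).Adj (f x) (f (x + 1)) := by
  have : Fact (1 < ℓ) := ⟨hℓ⟩
  have hadj : (cycleGraph ℓ).Adj x (x + 1) :=
    ⟨(add_ne_left.mpr one_ne_zero).symm, Or.inl rfl⟩
  exact SimpleGraph.map_adj_apply' hadj (hf.ne hadj.ne)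

variable {ℓ a b : ℕ} [NeZero ℓ]

theorem cycleGraph_exists_isLbColoring_zero_eq (hℓ : 3 ≤ ℓ) (h : b ≤ (a - 2 * b) * (ℓ / 2))
    {L : ZMod ℓ → Finset ℤ} (hL : ∀ v, (L v).card = a) {c₀ : Finset ℤ} (hc₀ : c₀ ⊆ L 0)
    (hcard : c₀.card = b) :
    ∃ c, IsLbColoring (cycleGraph ℓ) L b c ∧ c 0 = c₀ := by
  have hab := two_mul_le_of_le_sub_two_mul_mul h
  set e := a - 2 * b
  -- index `i` of the path is the vertex `ℓ - 2 - i`; the final vertex is `ℓ - 1`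
  set M : ℕ → Finset ℤ := fun i => L ((ℓ - 2 - i : ℕ) : ZMod ℓ)
  set F := L ((ℓ - 1 : ℕ) : ZMod ℓ) \ c₀
  have hM : ∀ i, 2 * b + e ≤ (M i).card := fun i => by simp only [M, hL]; omega
  have hF : b + e ≤ F.card := by
    show b + e ≤ (L ((ℓ - 1 : ℕ) : ZMod ℓ) \ c₀).card
    have := Finset.le_card_sdiff c₀ (L ((ℓ - 1 : ℕ) : ZMod ℓ))
    rw [hL, hcard] at this
    omega
  have hbudget := le_dangerBudget hM hF
  have hc₀d : ((c₀ ∩ dangerSet M F (ℓ - 2)).card : ℤ) ≤ dangerBudget b M F (ℓ - 2) := by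
    refine le_trans ?_ (hbudget (ℓ - 2))
    rw [show (ℓ - 2) / 2 + 1 = ℓ / 2 by omega]
    exact_mod_cast ((Finset.card_le_card Finset.inter_subset_left).trans hcard.le).trans h
  obtain ⟨c, hcd, hc, hc0⟩ := exists_pathColoring_of_card_inter_dangerSet_le
    (fun i => by have := hM i; omega) (fun s => le_trans (by positivity) (hbudget s))
    (ℓ - 2) hcard hc₀d
  obtain ⟨T, hTF, hTcard⟩ := Finset.exists_subset_card_eq hc0
  have hval : ∀ x : ZMod ℓ, x.val < ℓ := ZMod.val_lt
  have hcast : ∀ x : ZMod ℓ, ((x.val : ℕ) : ZMod ℓ) = x := ZMod.natCast_zmod_val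
  set col : ZMod ℓ → Finset ℤ := fun x => if x.val = ℓ - 1 then T else c (ℓ - 2 - x.val)
  have hcol0 : col 0 = c₀ := by
    simp only [col, ZMod.val_zero, if_neg (show 0 ≠ ℓ - 1 by omega), Nat.sub_zero, hcd]
  have hcol : ∀ x : ZMod ℓ, col x ⊆ L x ∧ (col x).card = b := by
    intro x
    by_cases hx : x.val = ℓ - 1
    · simp only [col, if_pos hx]
      refine ⟨?_, hTcard⟩
      rw [← hcast x, hx]
      exact (hTF.trans Finset.sdiff_subset).trans Finset.sdiff_subset
    by_cases hx0 : x.val = 0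
    · rw [(ZMod.val_eq_zero x).mp hx0, hcol0]
      exact ⟨hc₀, hcard⟩
    simp only [col, if_neg hx]
    obtain ⟨hcM, hccard, -⟩ := hc (ℓ - 2 - x.val) (by omega)
    refine ⟨?_, hccard⟩
    convert hcM using 2
    rw [show ℓ - 2 - (ℓ - 2 - x.val) = x.val by have := hval x; omega, hcast]
  have hstep : ∀ x : ZMod ℓ, Disjoint (col x) (col (x + 1)) := by
    intro x
    have hx1 := ZMod.val_add_one_eq_mod x
    have hx := hval x
    by_cases hxl : x.val = ℓ - 1
    · rw [hxl, show ℓ - 1 + 1 = ℓ by omega, Nat.mod_self, ZMod.val_eq_zero] at hx1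
      rw [hx1, hcol0]
      simp only [col, if_pos hxl]
      exact Finset.disjoint_of_subset_left (hTF.trans Finset.sdiff_subset) Finset.sdiff_disjoint
    rw [Nat.mod_eq_of_lt (by omega)] at hx1
    simp only [col, if_neg hxl, hx1]
    by_cases hxl' : x.val + 1 = ℓ - 1
    · rw [if_pos hxl', show ℓ - 2 - x.val = 0 by omega]
      exact Finset.disjoint_of_subset_right hTF Finset.disjoint_sdiff
    · rw [if_neg hxl', show ℓ - 2 - x.val = (ℓ - 2 - (x.val + 1)) + 1 by omega]
      exact (hc _ (by omega)).2.2.symm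
  refine ⟨col, ⟨fun x => (hcol x).1, fun x => (hcol x).2, ?_⟩, hcol0⟩
  rintro x y ⟨-, rfl | rfl⟩
  exacts [hstep x, (hstep y).symm]

theorem freeChoosable_cycleGraph (hℓ : 3 ≤ ℓ) (h : b ≤ (a - 2 * b) * (ℓ / 2)) :
    FreeChoosable (cycleGraph ℓ) a b :=
  .of_iso_transitive 0 (fun v => ⟨cycleGraph.rotate ℓ v, zero_add v⟩)
    fun _ hL _ hc₀ hcard => cycleGraph_exists_isLbColoring_zero_eq hℓ h hL hc₀ hcard

end Cycle

section Binocular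

theorem pathV_injective {m : ℕ} (hm : 1 ≤ m) (p : ℕ) : Function.Injective (pathV m p) := by
  intro i j h
  unfold pathV at h
  split_ifs at h <;> omega

theorem pathV_add_val_injective {m : ℕ} (hm : 1 ≤ m) (n p : ℕ) [NeZero n] :
    Function.Injective fun x : ZMod n => pathV m p (p + x.val) :=
  fun x y h => ZMod.val_injective n (by simpa using pathV_injective hm p h)

theorem cyc2V_eq_pathV {m : ℕ} (hm : 1 ≤ m) (p j : ℕ) : cyc2V m p j = pathV m p (p + j) := by
  unfold pathV cyc2V
  split_ifs <;> omega

theorem eq_zero_of_pathV_lt {m p j : ℕ} (h : pathV m p j < m) : j = 0 := by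
  unfold pathV at h
  split_ifs at h <;> omega

variable (m n p : ℕ)

def bgFirstCycle : SimpleGraph ℕ := (cycleGraph m).map ZMod.val

def bgSecondCycle : SimpleGraph ℕ := (cycleGraph n).map fun x => pathV m p (p + x.val)

variable {m n p} [NeZero m] [NeZero n]

theorem fromRel_bgRel_le (hm : 2 ≤ m) (hn : 2 ≤ n) :
    SimpleGraph.fromRel (bgRel m n p) ≤
      bgFirstCycle m ⊔ pathThrough (pathV m p) p ⊔ bgSecondCycle m n p := by
  have hval : ∀ {ℓ} [NeZero ℓ] {i : ℕ}, i < ℓ →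
      ∃ z : ZMod ℓ, z.val = i ∧ (z + 1).val = (i + 1) % ℓ := fun hi =>
    ⟨_, ZMod.val_cast_of_lt hi, by rw [ZMod.val_add_one_eq_mod, ZMod.val_cast_of_lt hi]⟩
  have key : ∀ x y, bgRel m n p x y →
      (bgFirstCycle m ⊔ pathThrough (pathV m p) p ⊔ bgSecondCycle m n p).Adj x y := by
    rintro x y (⟨i, hi, rfl, rfl⟩ | ⟨j, hj, rfl, rfl⟩ | ⟨j, hj, rfl, rfl⟩)
    · obtain ⟨z, hz, hz1⟩ := hval hi
      rw [← hz1, ← hz]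
      exact Or.inl (Or.inl (cycleGraph_map_adj_add_one hm (ZMod.val_injective m) _))
    · exact Or.inl (Or.inr (pathThrough_adj (pathV_injective (by omega) p) hj))
    · obtain ⟨z, hz, hz1⟩ := hval hj
      rw [cyc2V_eq_pathV (by omega), cyc2V_eq_pathV (by omega), ← hz1, ← hz]
      exact Or.inr (cycleGraph_map_adj_add_one hn (pathV_add_val_injective (by omega) n p) _)
  rintro x y ⟨-, hxy | hxy⟩
  exacts [key x y hxy, (key y x hxy).symm]

theorem freeChoosable_bgFirstCycle_sup_pathThrough_sup {a b : ℕ} (hm : 3 ≤ m) (hn : 3 ≤ n)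
    (hbm : b ≤ (a - 2 * b) * (m / 2)) (hbn : b ≤ (a - 2 * b) * (n / 2)) :
    FreeChoosable (bgFirstCycle m ⊔ pathThrough (pathV m p) p ⊔ bgSecondCycle m n p) a b := by
  have hab := two_mul_le_of_le_sub_two_mul_mul hbm
  have hC₁ : FreeChoosable (bgFirstCycle m) a b :=
    .map (ZMod.val_injective m) (by omega) (freeChoosable_cycleGraph hm hbm)
  have hC₂ : FreeChoosable (bgSecondCycle m n p) a b :=
    .map (pathV_add_val_injective (by omega) n p) (by omega) (freeChoosable_cycleGraph hn hbn)
  have hC₁_support : ∀ v ∈ (bgFirstCycle m).support, v < m := by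
    rintro _ hv
    obtain ⟨x, rfl⟩ := SimpleGraph.support_map_subset _ _ hv
    exact ZMod.val_lt x
  refine (hC₁.sup_pathThrough hab (pathV_injective (by omega) p)
    (fun j hj => eq_zero_of_pathV_lt (hC₁_support _ hj)) p).sup hC₂ (w := pathV m p p) ?_
  rintro v ⟨hv, hv₂⟩
  obtain ⟨x, rfl⟩ := SimpleGraph.support_map_subset _ _ hv₂
  rw [SimpleGraph.support_sup] at hv
  rcases hv with hv | hv
  · have := eq_zero_of_pathV_lt (hC₁_support _ hv)
    simp [show p = 0 by omega, show x.val = 0 by omega]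
  · obtain ⟨j, hj, hjx⟩ := support_pathThrough_subset _ p hv
    have := pathV_injective (by omega) p hjx
    simp only [Set.mem_Iic] at hj
    simp [show x.val = 0 by omega]

end Binocular

theorem freeChoosable_binocularGraph {m n p a b : ℕ} (hm : 3 ≤ m) (hn : 3 ≤ n)
    (hbm : b ≤ (a - 2 * b) * (m / 2)) (hbn : b ≤ (a - 2 * b) * (n / 2)) :
    FreeChoosable (binocularGraph m n p) a b := by
  have : NeZero m := ⟨by omega⟩
  have : NeZero n := ⟨by omega⟩
  exact .mono_left (fun _ _ h => fromRel_bgRel_le (by omega) (by omega) h) <|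
    .comap Fin.val_injective (freeChoosable_bgFirstCycle_sup_pathThrough_sup (p := p) hm hn hbm hbn)

theorem le_sub_two_mul_mul_of_two_add_one_div_le {a b k : ℕ} (hk : 0 < k)
    (h : (2 : ℚ) + 1 / k ≤ a / b) : b ≤ (a - 2 * b) * k := by
  have hkQ : (0 : ℚ) < k := by exact_mod_cast hk
  have hbQ : (0 : ℚ) < b := by
    rcases Nat.eq_zero_or_pos b with rfl | hb
    · rw [Nat.cast_zero, div_zero] at h
      linarith [show (0 : ℚ) < 1 / k by positivity]
    · exact_mod_cast hb
  rw [le_div_iff₀ hbQ] at h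
  have : (2 * b * k + b : ℚ) ≤ a * k := calc
    (2 * b * k + b : ℚ) = (2 + 1 / k) * b * k := by field_simp
    _ ≤ a * k := mul_le_mul_of_nonneg_right h hkQ.le
  rw [Nat.sub_mul]
  exact Nat.le_sub_of_add_le (by rw [add_comm]; exact_mod_cast this)

theorem stmt14_general (m n p : ℕ) (hm : 3 ≤ m) (hn : 3 ≤ n)
    (a b : ℕ)
    (hab : (a : ℚ) / b ≥ 2 + 1 / ((min m n / 2 : ℕ) : ℚ)) :
    FreeChoosable (binocularGraph m n p) a b := by
  have hb := le_sub_two_mul_mul_of_two_add_one_div_le (by omega) hab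
  exact freeChoosable_binocularGraph hm hn
    (hb.trans (Nat.mul_le_mul_left _ (Nat.div_le_div_right (min_le_left m n))))
    (hb.trans (Nat.mul_le_mul_left _ (Nat.div_le_div_right (min_le_right m n))))

/-- for `m, n ≥ 3`, `p ≥ 0` and `a/b ≥ 2 + 1/⌊min(m,n)/2⌋`, the
binocular graph BG(m,n,p) is free (a,b)-choosable. -/
theorem stmt14 (m n p : ℕ) (hm : 3 ≤ m) (hn : 3 ≤ n)
    (a b : ℕ) (ha : 0 < a) (hb : 0 < b)
    (hab : (a : ℚ) / b ≥ 2 + 1 / ((min m n / 2 : ℕ) : ℚ)) :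
    FreeChoosable (binocularGraph m n p) a b :=
  stmt14_general m n p hm hn a b hab
end
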